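/- arXiv:2412.03071 — 5 statements merged into one kernel-verified Lean document; each statement's English description precedes it below -/
import Mathlib

section
/- Let p be an odd prime and m = (p-1)/2. In the polynomial ring F_p[x], for any θ ∈ F_p \ {0} and λ ∈ F_p, the coefficient of x^{p-1} in the polynomial (θ·x·(x-1)·(x-λ))^m equals (-θ)^m · Σ_{i=0}^{m} (binom(m,i))^2 · λ^i, i.e. it equals (-θ)^m · H_p(λ). -/
open Polynomial

/-- The coefficient of `x^(p-1)` in `(θ·x·(x-1)·(x-λ))^m` equals `(-θ)^m · H_p(λ)`,
where `m = (p-1)/2` and `H_p(t) = ∑_{i=0}^m binom(m,i)^2 t^i`. -/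
theorem stmt0 (p : ℕ) (hp : Nat.Prime p) (hodd : Odd p)
    (θ lam : ZMod p) (hθ : θ ≠ 0) :
    ((C θ * X * (X - 1) * (X - C lam)) ^ ((p - 1) / 2)).coeff (p - 1) =
      (-θ) ^ ((p - 1) / 2) *
        ∑ i ∈ Finset.range ((p - 1) / 2 + 1),
          (((p - 1) / 2).choose i : ZMod p) ^ 2 * lam ^ i := by
  obtain ⟨m, hm⟩ := hodd
  have hp1 : 1 ≤ p := hp.one_lt.le
  have hm1 : (p - 1) / 2 = m := by omega
  have hm2 : p - 1 = m + m := by omega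
  rw [hm1, hm2]
  have key : (C θ * X * (X - 1) * (X - C lam)) ^ m
      = ((X - 1) ^ m * (X - C lam) ^ m) * X ^ m * C (θ ^ m) := by
    rw [C_pow, mul_pow, mul_pow, mul_pow]; ring
  rw [key, coeff_mul_C, coeff_mul_X_pow, coeff_mul,
    Finset.Nat.sum_antidiagonal_eq_sum_range_succ_mk]
  have hsub : ∀ a : ZMod p, (X - C a : (ZMod p)[X]) = X + C (-a) := by
    intro a; rw [C_neg]; ring
  have hXone : (X - 1 : (ZMod p)[X]) = X + C (-1) := by
    rw [C_neg, C_1]; ring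
  have step : ∀ k ∈ Finset.range (m + 1),
      ((X - 1 : (ZMod p)[X]) ^ m).coeff k * ((X - C lam) ^ m).coeff (m - k)
        = (-1 : ZMod p) ^ m * ((m.choose k : ZMod p) ^ 2 * lam ^ k) := by
    intro k hk
    have hkm : k ≤ m := by
      simpa using Nat.lt_succ_iff.mp (Finset.mem_range.mp hk)
    rw [hXone, hsub, coeff_X_add_C_pow, coeff_X_add_C_pow]
    have h1 : m - (m - k) = k := by omega
    rw [h1, Nat.choose_symm hkm, neg_pow lam k]
    have h2 : (-1 : ZMod p) ^ (m - k) * (-1 : ZMod p) ^ k = (-1 : ZMod p) ^ m := by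
      rw [← pow_add]; congr 1; omega
    linear_combination ((m.choose k : ZMod p)) ^ 2 * lam ^ k * h2
  rw [Finset.sum_congr rfl step, ← Finset.mul_sum, neg_pow θ]
  ring
end

section
/- Let p ≥ 17 be a prime, m = (p-1)/2, θ ∈ F_p \ {0} and λ ∈ F_p \ {0,1}. Then #E_λ^{(θ)}(F_p) = p + 1 + ⌊2√p⌋ (i.e. the curve attains the Serre bound over F_p) if and only if (-θ)^m · H_p(λ) = -(⌊2√p⌋ mod p) in F_p. -/
open Finset

section Aux

variable (p : ℕ) [Fact p.Prime]

noncomputable def Tsum (lam : ZMod p) : ℤ :=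
  ∑ x : ZMod p, quadraticChar (ZMod p) (x * (x - 1) * (x - lam))

noncomputable def cnt (θ lam : ZMod p) : ℕ :=
  Nat.card {P : ZMod p × ZMod p // P.2 ^ 2 = θ * P.1 * (P.1 - 1) * (P.1 - lam)}

variable {p}

lemma ringChar_ne_two (hp2 : p ≠ 2) : ringChar (ZMod p) ≠ 2 := by
  rw [ZMod.ringChar_zmod_n]; exact hp2

lemma card_sqrts (hp2 : p ≠ 2) (c : ZMod p) :
    (Fintype.card {y : ZMod p // y ^ 2 = c} : ℤ) = quadraticChar (ZMod p) c + 1 := by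
  have h := quadraticChar_card_sqrts (ringChar_ne_two hp2) c
  have e : Fintype.card {y : ZMod p // y ^ 2 = c} = Fintype.card {x : ZMod p | x ^ 2 = c} :=
    Fintype.card_congr (Equiv.subtypeEquivRight (fun y => Iff.rfl))
  rw [← h, Set.toFinset_card, e]

lemma cnt_eq_sum (θ lam : ZMod p) :
    cnt p θ lam = ∑ x : ZMod p, Fintype.card {y : ZMod p // y ^ 2 = θ * x * (x - 1) * (x - lam)} := by
  rw [cnt, Nat.card_eq_fintype_card]
  calc Fintype.card {P : ZMod p × ZMod p // P.2 ^ 2 = θ * P.1 * (P.1 - 1) * (P.1 - lam)}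
      = Fintype.card ((x : ZMod p) × {y : ZMod p // y ^ 2 = θ * x * (x - 1) * (x - lam)}) :=
        Fintype.card_congr (Equiv.subtypeProdEquivSigmaSubtype
          (fun a b : ZMod p => b ^ 2 = θ * a * (a - 1) * (a - lam)))
    _ = _ := Fintype.card_sigma

/-- L1: the count as p + χ(θ)·T(λ) over ℤ. -/
lemma cnt_int (hp2 : p ≠ 2) (θ lam : ZMod p) :
    (cnt p θ lam : ℤ) = p + quadraticChar (ZMod p) θ * Tsum p lam := by
  rw [cnt_eq_sum, Nat.cast_sum]
  have : ∀ x : ZMod p, (Fintype.card {y : ZMod p // y ^ 2 = θ * x * (x - 1) * (x - lam)} : ℤ)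
      = 1 + quadraticChar (ZMod p) θ * quadraticChar (ZMod p) (x * (x - 1) * (x - lam)) := by
    intro x
    rw [card_sqrts hp2]
    have : θ * x * (x - 1) * (x - lam) = θ * (x * (x - 1) * (x - lam)) := by ring
    rw [this, map_mul]
    ring
  rw [Finset.sum_congr rfl (fun x _ => this x), Finset.sum_add_distrib, Finset.sum_const,
    ← Finset.mul_sum, ← Tsum]
  simp [ZMod.card]

end Aux

section Aux2

variable {p : ℕ} [Fact p.Prime]

lemma p_odd (hp2 : p ≠ 2) : p % 2 = 1 := by
  rcases (Fact.out : p.Prime).eq_two_or_odd with h | h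
  · exact absurd h hp2
  · exact h

lemma sum_pow_zero_of_lt {k : ℕ} (hk : k < p - 1) : ∑ x : ZMod p, x ^ k = 0 := by
  have := FiniteField.sum_pow_lt_card_sub_one (K := ZMod p) k (by rwa [ZMod.card])
  exact this

lemma sum_pow_all_one {k : ℕ} (hk0 : k ≠ 0) (h1 : ∀ x : ZMod p, x ≠ 0 → x ^ k = 1) :
    ∑ x : ZMod p, x ^ k = -1 := by
  classical
  have h0 : (0 : ZMod p) ∈ (univ : Finset (ZMod p)) := mem_univ _
  rw [← Finset.sum_erase_add _ _ h0, zero_pow hk0]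
  rw [Finset.sum_congr rfl (fun x hx => h1 x (Finset.ne_of_mem_erase hx))]
  rw [Finset.sum_const, Finset.card_erase_of_mem h0, Finset.card_univ, ZMod.card]
  have hp2 : 2 ≤ p := (Fact.out : p.Prime).two_le
  have : ((p - 1 : ℕ) : ZMod p) = -1 := by
    have : ((p : ℕ) : ZMod p) = 0 := ZMod.natCast_self p
    push_cast [Nat.cast_sub (by omega : 1 ≤ p)]
    rw [this]; ring
  rw [nsmul_eq_mul, mul_one, this, add_zero]

lemma sum_pow_gen {k : ℕ} (hk0 : 0 < k) :
    ∑ x : ZMod p, x ^ k = if (p - 1) ∣ k then (-1 : ZMod p) else 0 := by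
  have hp2 : 2 ≤ p := (Fact.out : p.Prime).two_le
  split_ifs with hdvd
  · obtain ⟨t, rfl⟩ := hdvd
    refine sum_pow_all_one (by omega) (fun x hx => ?_)
    rw [pow_mul, ZMod.pow_card_sub_one_eq_one hx, one_pow]
  · have hr : k % (p - 1) < p - 1 := Nat.mod_lt _ (by omega)
    have hrne : k % (p - 1) ≠ 0 := fun h => hdvd (Nat.dvd_of_mod_eq_zero h)
    have hx : ∀ x : ZMod p, x ^ k = x ^ (k % (p - 1)) := by
      intro x
      by_cases hx0 : x = 0
      · rw [hx0, zero_pow hk0.ne', zero_pow hrne]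
      · conv_lhs => rw [← Nat.div_add_mod k (p - 1)]
        rw [pow_add, pow_mul, ZMod.pow_card_sub_one_eq_one hx0, one_pow, one_mul]
    rw [Finset.sum_congr rfl (fun x _ => hx x), sum_pow_zero_of_lt hr]

end Aux2

section Aux3

variable {p : ℕ} [Fact p.Prime]

/-- The key character-sum / Hasse-polynomial congruence. -/
lemma sum_cube_pow (hp2 : p ≠ 2) (lam : ZMod p) :
    ∑ x : ZMod p, (x * (x - 1) * (x - lam)) ^ ((p - 1) / 2)
      = -(-1 : ZMod p) ^ ((p - 1) / 2) *
        ∑ i ∈ range ((p - 1) / 2 + 1), (((p - 1) / 2).choose i : ZMod p) ^ 2 * lam ^ i := by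
  have hple : 2 ≤ p := (Fact.out : p.Prime).two_le
  have hpodd : p % 2 = 1 := p_odd hp2
  have hp3 : 3 ≤ p := by
    rcases Nat.lt_or_ge p 3 with h | h
    · interval_cases p <;> omega
    · exact h
  set m := (p - 1) / 2 with hmdef
  have h2m : 2 * m = p - 1 := by omega
  have hm0 : 0 < m := by omega
  set c : ℕ → ℕ → ZMod p := fun i j =>
    (-1 : ZMod p) ^ (i + m) * (m.choose i : ZMod p) *
      ((-1 : ZMod p) ^ (j + m) * (m.choose j : ZMod p) * lam ^ (m - j)) with hc
  have hterm : ∀ x : ZMod p, (x * (x - 1) * (x - lam)) ^ m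
      = ∑ j ∈ range (m + 1), ∑ i ∈ range (m + 1), c i j * x ^ (m + i + j) := by
    intro x
    rw [mul_pow, sub_pow x lam m, Finset.mul_sum]
    refine Finset.sum_congr rfl (fun j hj => ?_)
    rw [mul_pow, sub_pow x 1 m, Finset.mul_sum, Finset.sum_mul]
    refine Finset.sum_congr rfl (fun i hi => ?_)
    rw [hc]
    ring
  rw [Finset.sum_congr rfl (fun x _ => hterm x), Finset.sum_comm]
  have hswap : ∀ j ∈ range (m + 1),
      (∑ x : ZMod p, ∑ i ∈ range (m + 1), c i j * x ^ (m + i + j))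
      = ∑ i ∈ range (m + 1), c i j * (∑ x : ZMod p, x ^ (m + i + j)) := by
    intro j _
    rw [Finset.sum_comm]
    exact Finset.sum_congr rfl (fun i _ => by rw [Finset.mul_sum])
  rw [Finset.sum_congr rfl hswap]
  have hps : ∀ i ∈ range (m + 1), ∀ j ∈ range (m + 1),
      (∑ x : ZMod p, x ^ (m + i + j)) = if i + j = m then (-1 : ZMod p) else 0 := by
    intro i hi j hj
    rw [mem_range] at hi hj
    rw [sum_pow_gen (by omega : 0 < m + i + j)]
    split_ifs with h1 h2 h2
    · rfl
    · exfalso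
      obtain ⟨t, ht⟩ := h1
      rcases t with _ | _ | t
      · omega
      · omega
      · have : 2 * m * 2 ≤ (p - 1) * (t + 1 + 1) := by
          rw [h2m]; exact Nat.mul_le_mul_left _ (by omega)
        omega
    · exact absurd ⟨1, by omega⟩ h1
    · rfl
  have hcollapse : ∀ j ∈ range (m + 1),
      (∑ i ∈ range (m + 1), c i j * (∑ x : ZMod p, x ^ (m + i + j)))
      = -(-1 : ZMod p) ^ m * ((m.choose (m - j) : ZMod p) ^ 2 * lam ^ (m - j)) := by
    intro j hj
    have hjm : j ≤ m := by rw [mem_range] at hj; omega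
    have hstep : ∀ i ∈ range (m + 1), c i j * (∑ x : ZMod p, x ^ (m + i + j))
        = if i + j = m then c i j * (-1) else 0 := by
      intro i hi
      rw [hps i hi j hj]
      split_ifs <;> simp
    rw [Finset.sum_congr rfl hstep, Finset.sum_eq_single (m - j)]
    · rw [if_pos (by omega : (m - j) + j = m)]
      simp only [hc]
      have hsgn : (-1 : ZMod p) ^ (m - j + m) * (-1 : ZMod p) ^ (j + m) = (-1 : ZMod p) ^ m := by
        rw [← pow_add, (by omega : (m - j + m) + (j + m) = m + 2 * m), pow_add, pow_mul,
          neg_one_sq, one_pow, mul_one]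
      rw [← Nat.choose_symm hjm]
      calc (-1 : ZMod p) ^ (m - j + m) * (m.choose (m - j) : ZMod p) *
            ((-1 : ZMod p) ^ (j + m) * (m.choose (m - j) : ZMod p) * lam ^ (m - j)) * (-1)
          = ((-1 : ZMod p) ^ (m - j + m) * (-1 : ZMod p) ^ (j + m)) *
              ((m.choose (m - j) : ZMod p) * (m.choose (m - j) : ZMod p) * lam ^ (m - j)) * (-1) := by
            ring
        _ = -(-1 : ZMod p) ^ m * ((m.choose (m - j) : ZMod p) ^ 2 * lam ^ (m - j)) := by
            rw [hsgn]; ring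
    · intro b hb hbne
      rw [if_neg (fun h => hbne (by omega))]
    · intro h
      exact absurd (mem_range.mpr (by omega)) h
  rw [Finset.sum_congr rfl hcollapse, ← Finset.mul_sum]
  congr 1
  have hrefl := Finset.sum_range_reflect (fun i => (m.choose i : ZMod p) ^ 2 * lam ^ i) (m + 1)
  simp only [Nat.add_sub_cancel] at hrefl
  exact hrefl

end Aux3

section Aux4

variable {p : ℕ} [Fact p.Prime]

lemma card_sqrts_zmod (hp2 : p ≠ 2) (c : ZMod p) :
    (Fintype.card {y : ZMod p // y ^ 2 = c} : ZMod p) = 1 + c ^ ((p - 1) / 2) := by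
  have h := card_sqrts hp2 c
  have h2 : ((Fintype.card {y : ZMod p // y ^ 2 = c} : ℤ) : ZMod p)
      = ((quadraticChar (ZMod p) c : ℤ) : ZMod p) + 1 := by rw [h]; push_cast; ring
  rw [Int.cast_natCast] at h2
  have h3 : ((quadraticChar (ZMod p) c : ℤ) : ZMod p) = c ^ (Fintype.card (ZMod p) / 2) :=
    quadraticChar_eq_pow_of_char_ne_two' (ringChar_ne_two hp2) c
  rw [h2, h3, ZMod.card]
  have : p / 2 = (p - 1) / 2 := by have := p_odd hp2; omega
  rw [this]; ring

lemma cnt_zmod (hp2 : p ≠ 2) (θ lam : ZMod p) :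
    (cnt p θ lam : ZMod p) = -(-θ) ^ ((p - 1) / 2) *
        ∑ i ∈ range ((p - 1) / 2 + 1), (((p - 1) / 2).choose i : ZMod p) ^ 2 * lam ^ i := by
  rw [cnt_eq_sum, Nat.cast_sum,
    Finset.sum_congr rfl (fun x (_ : x ∈ univ) => card_sqrts_zmod hp2 (θ * x * (x-1) * (x-lam))),
    Finset.sum_add_distrib, Finset.sum_const, card_univ, ZMod.card, nsmul_eq_mul, mul_one,
    ZMod.natCast_self, zero_add]
  have hfac : ∀ x : ZMod p, (θ * x * (x - 1) * (x - lam)) ^ ((p - 1) / 2)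
      = θ ^ ((p - 1) / 2) * ((x * (x - 1) * (x - lam)) ^ ((p - 1) / 2)) := by
    intro x
    rw [(by ring : θ * x * (x - 1) * (x - lam) = θ * (x * (x - 1) * (x - lam))), mul_pow]
  rw [Finset.sum_congr rfl (fun x _ => hfac x), ← Finset.mul_sum, sum_cube_pow hp2 lam,
    neg_pow θ]
  ring

end Aux4

section Aux5

variable {p : ℕ} [Fact p.Prime]

lemma conic_sum (hp2 : p ≠ 2) {c : ZMod p} (hc : c ≠ 0) :
    ∑ z : ZMod p, quadraticChar (ZMod p) (z * (z - c)) = -1 := by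
  classical
  have h0 : (0 : ZMod p) ∈ (univ : Finset (ZMod p)) := mem_univ _
  rw [← Finset.sum_erase_add _ _ h0, zero_mul, quadraticChar_zero, add_zero]
  have h1 : ∀ z ∈ (univ : Finset (ZMod p)).erase 0,
      quadraticChar (ZMod p) (z * (z - c)) = quadraticChar (ZMod p) (1 - c * z⁻¹) := by
    intro z hz
    have hz0 : z ≠ 0 := Finset.ne_of_mem_erase hz
    have : z * (z - c) = z ^ 2 * (1 - c * z⁻¹) := by
      field_simp
    rw [this, map_mul, quadraticChar_sq_one' hz0, one_mul]
  rw [Finset.sum_congr rfl h1]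
  have hbij : ∑ z ∈ (univ : Finset (ZMod p)).erase 0,
      quadraticChar (ZMod p) (1 - c * z⁻¹)
      = ∑ w ∈ (univ : Finset (ZMod p)).erase 1, quadraticChar (ZMod p) w := by
    refine Finset.sum_bij' (fun z _ => 1 - c * z⁻¹) (fun w _ => c * (1 - w)⁻¹) ?_ ?_ ?_ ?_ ?_
    · intro z hz
      have hz0 : z ≠ 0 := Finset.ne_of_mem_erase hz
      refine Finset.mem_erase.mpr ⟨?_, mem_univ _⟩
      intro h
      have : c * z⁻¹ = 0 := by linear_combination -h
      rcases mul_eq_zero.mp this with h' | h'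
      · exact hc h'
      · exact hz0 (inv_eq_zero.mp h')
    · intro w hw
      have hw1 : w ≠ 1 := Finset.ne_of_mem_erase hw
      refine Finset.mem_erase.mpr ⟨?_, mem_univ _⟩
      intro h
      rcases mul_eq_zero.mp h with h' | h'
      · exact hc h'
      · exact (sub_ne_zero.mpr (Ne.symm hw1)) (inv_eq_zero.mp h')
    · intro z hz
      have hz0 : z ≠ 0 := Finset.ne_of_mem_erase hz
      field_simp
      rw [sub_sub_cancel, div_self hc]
    · intro w hw
      have hw1 : w ≠ 1 := Finset.ne_of_mem_erase hw
      have : (1 : ZMod p) - w ≠ 0 := sub_ne_zero.mpr (Ne.symm hw1)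
      field_simp
      ring
    · intro z hz
      rfl
  rw [hbij]
  have hall := quadraticChar_sum_zero (F := ZMod p) (ringChar_ne_two hp2)
  have hsplit := Finset.sum_erase_add (univ : Finset (ZMod p))
    (fun w => quadraticChar (ZMod p) w) (mem_univ (1 : ZMod p))
  rw [hall] at hsplit
  have h1v : quadraticChar (ZMod p) 1 = 1 := map_one _
  simp only [h1v] at hsplit
  linarith

lemma quadChar_sq_ite (v : ZMod p) :
    (quadraticChar (ZMod p) v) ^ 2 = if v = 0 then 0 else 1 := by
  split_ifs with h
  · rw [h, quadraticChar_zero]; ring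
  · exact quadraticChar_sq_one h

lemma sum_sq_g : ∑ x : ZMod p, (quadraticChar (ZMod p) (x * (x - 1))) ^ 2 = (p : ℤ) - 2 := by
  classical
  rw [Finset.sum_congr rfl (fun x (_ : x ∈ univ) => quadChar_sq_ite (x * (x - 1)))]
  rw [Finset.sum_ite, Finset.sum_const, Finset.sum_const, smul_zero, zero_add, nsmul_eq_mul,
    mul_one]
  have hfe : (univ : Finset (ZMod p)).filter (fun x => ¬ x * (x - 1) = 0)
      = univ \ ((univ : Finset (ZMod p)).filter (fun x => x * (x - 1) = 0)) := by
    ext x; simp [Finset.mem_sdiff]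
  have hf0 : (univ : Finset (ZMod p)).filter (fun x => x * (x - 1) = 0) = {0, 1} := by
    ext x
    simp only [Finset.mem_filter, mem_univ, true_and, Finset.mem_insert, Finset.mem_singleton,
      mul_eq_zero, sub_eq_zero]
  have h01 : (0 : ZMod p) ≠ 1 := by
    have : (1 : ZMod p) ≠ 0 := one_ne_zero
    exact fun h => this h.symm
  have hcard : ((univ : Finset (ZMod p)).filter (fun x => ¬ x * (x - 1) = 0)).card = p - 2 := by
    rw [hfe, Finset.card_sdiff_of_subset (Finset.subset_univ _), hf0, Finset.card_univ, ZMod.card]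
    rw [Finset.card_insert_of_notMem (by simp [h01]), Finset.card_singleton]
  rw [hcard]
  have hp2 : 2 ≤ p := (Fact.out : p.Prime).two_le
  push_cast [Nat.cast_sub hp2]
  ring

lemma second_moment (hp2 : p ≠ 2) :
    ∑ lam : ZMod p, (Tsum p lam) ^ 2 = (p : ℤ) ^ 2 - 2 * p - 1 := by
  classical
  set A : ZMod p → ℤ := fun x => quadraticChar (ZMod p) (x * (x - 1)) with hA
  have hinner : ∀ x x' : ZMod p,
      (∑ lam : ZMod p, quadraticChar (ZMod p) ((x - lam) * (x' - lam)))
      = if x = x' then (p : ℤ) - 1 else -1 := by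
    intro x x'
    have hre : ∑ lam : ZMod p, quadraticChar (ZMod p) ((x - lam) * (x' - lam))
        = ∑ z : ZMod p, quadraticChar (ZMod p) (z * (z - (x - x'))) := by
      refine Fintype.sum_equiv (Equiv.subLeft x) _ _ (fun lam => ?_)
      rw [Equiv.subLeft_apply]
      congr 1
      ring
    rw [hre]
    split_ifs with h
    · subst h
      simp only [sub_self, sub_zero]
      have : ∀ z : ZMod p, quadraticChar (ZMod p) (z * z)
          = (quadraticChar (ZMod p) z) ^ 2 := by
        intro z; rw [map_mul]; ring
      rw [Finset.sum_congr rfl (fun z _ => this z),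
        Finset.sum_congr rfl (fun z (_ : z ∈ univ) => quadChar_sq_ite z)]
      rw [Finset.sum_ite, Finset.sum_const, Finset.sum_const, smul_zero, zero_add, nsmul_eq_mul,
        mul_one]
      have : (univ : Finset (ZMod p)).filter (fun z => ¬ z = 0) = univ.erase 0 := by
        ext z; simp [Finset.mem_erase, and_comm]
      rw [this, Finset.card_erase_of_mem (mem_univ _), Finset.card_univ, ZMod.card]
      have h2 : 2 ≤ p := (Fact.out : p.Prime).two_le
      push_cast [Nat.cast_sub (by omega : 1 ≤ p)]
      ring
    · exact conic_sum hp2 (sub_ne_zero.mpr h)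
  have hsq : ∀ lam : ZMod p, (Tsum p lam) ^ 2
      = ∑ x : ZMod p, ∑ x' : ZMod p,
          (A x * A x') * quadraticChar (ZMod p) ((x - lam) * (x' - lam)) := by
    intro lam
    rw [Tsum, sq, Finset.sum_mul_sum]
    refine Finset.sum_congr rfl (fun x _ => Finset.sum_congr rfl (fun x' _ => ?_))
    simp only [hA]
    rw [map_mul (quadraticChar (ZMod p)) (x * (x - 1)) (x - lam),
      map_mul (quadraticChar (ZMod p)) (x' * (x' - 1)) (x' - lam),
      map_mul (quadraticChar (ZMod p)) (x - lam) (x' - lam)]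
    ring
  rw [Finset.sum_congr rfl (fun lam (_ : lam ∈ univ) => hsq lam)]
  rw [Finset.sum_comm]
  have hswap2 : ∀ x : ZMod p,
      (∑ lam : ZMod p, ∑ x' : ZMod p,
        (A x * A x') * quadraticChar (ZMod p) ((x - lam) * (x' - lam)))
      = ∑ x' : ZMod p, (A x * A x') *
          (∑ lam : ZMod p, quadraticChar (ZMod p) ((x - lam) * (x' - lam))) := by
    intro x
    rw [Finset.sum_comm]
    exact Finset.sum_congr rfl (fun x' _ => by rw [Finset.mul_sum])
  rw [Finset.sum_congr rfl (fun x (_ : x ∈ univ) => hswap2 x)]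
  have hsplit : ∀ x x' : ZMod p, (A x * A x') *
      (∑ lam : ZMod p, quadraticChar (ZMod p) ((x - lam) * (x' - lam)))
      = -(A x * A x') + (if x = x' then (A x * A x') * p else 0) := by
    intro x x'
    rw [hinner]
    split_ifs with h
    · ring
    · ring
  rw [Finset.sum_congr rfl (fun x (_ : x ∈ univ) => Finset.sum_congr rfl
    (fun x' (_ : x' ∈ univ) => hsplit x x'))]
  have hAsum : ∑ x : ZMod p, A x = -1 := by
    rw [hA]
    have : ∀ x : ZMod p, x * (x - 1) = x * (x - 1) := fun _ => rfl
    exact conic_sum hp2 one_ne_zero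
  have hAsq : ∑ x : ZMod p, A x * A x = (p : ℤ) - 2 := by
    have : ∀ x : ZMod p, A x * A x = (quadraticChar (ZMod p) (x * (x - 1))) ^ 2 := by
      intro x; rw [hA]; ring
    rw [Finset.sum_congr rfl (fun x _ => this x)]
    exact sum_sq_g
  have step : ∀ x : ZMod p,
      (∑ x' : ZMod p, (-(A x * A x') + (if x = x' then (A x * A x') * p else 0)))
      = -(A x * (∑ x' : ZMod p, A x')) + (A x * A x) * p := by
    intro x
    rw [Finset.sum_add_distrib, Finset.sum_neg_distrib, ← Finset.mul_sum,
      Finset.sum_ite_eq (univ : Finset (ZMod p)) x (fun x' => (A x * A x') * p),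
      if_pos (mem_univ x)]
  rw [Finset.sum_congr rfl (fun x (_ : x ∈ univ) => step x), Finset.sum_add_distrib,
    Finset.sum_neg_distrib, hAsum]
  have e1 : ∑ x : ZMod p, A x * (-1 : ℤ) = 1 := by
    rw [← Finset.sum_mul, hAsum]; ring
  have e2 : ∑ x : ZMod p, (A x * A x) * (p : ℤ) = ((p : ℤ) - 2) * p := by
    rw [← Finset.sum_mul, hAsq]
  rw [e1, e2]
  ring

end Aux5

section Aux6

variable {p : ℕ} [Fact p.Prime]

lemma Tsum_inv {lam : ZMod p} (hlam : lam ≠ 0) :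
    Tsum p lam = quadraticChar (ZMod p) lam * Tsum p lam⁻¹ := by
  rw [Tsum, Tsum, Finset.mul_sum]
  refine (Fintype.sum_equiv (Equiv.mulLeft₀ lam hlam) _ _ (fun v => ?_)).symm
  simp only [Equiv.mulLeft₀_apply]
  have harg : (lam * v) * ((lam * v) - 1) * ((lam * v) - lam)
      = lam * lam * lam * (v * (v - 1) * (v - lam⁻¹)) := by
    field_simp
  have hsq : quadraticChar (ZMod p) lam * quadraticChar (ZMod p) lam = 1 := by
    rw [← sq]; exact quadraticChar_sq_one hlam
  rw [harg, map_mul (quadraticChar (ZMod p)) (lam * lam * lam) (v * (v - 1) * (v - lam⁻¹)),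
    map_mul (quadraticChar (ZMod p)) (lam * lam) lam,
    map_mul (quadraticChar (ZMod p)) lam lam, hsq, one_mul]

lemma Tsum_one_sub (lam : ZMod p) :
    Tsum p lam = quadraticChar (ZMod p) (-1) * Tsum p (1 - lam) := by
  rw [Tsum, Tsum, Finset.mul_sum]
  refine (Fintype.sum_equiv (Equiv.subLeft 1) _ _ (fun v => ?_)).symm
  rw [Equiv.subLeft_apply]
  have harg : (1 - v) * ((1 - v) - 1) * ((1 - v) - lam)
      = (-1) * (v * (v - 1) * (v - (1 - lam))) := by ring
  rw [harg, map_mul (quadraticChar (ZMod p)) (-1 : ZMod p) (v * (v - 1) * (v - (1 - lam)))]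

lemma Tsum_inv_sq {lam : ZMod p} (hlam : lam ≠ 0) :
    (Tsum p lam⁻¹) ^ 2 = (Tsum p lam) ^ 2 := by
  rw [Tsum_inv hlam, mul_pow, quadraticChar_sq_one hlam, one_mul]

lemma Tsum_one_sub_sq (lam : ZMod p) :
    (Tsum p (1 - lam)) ^ 2 = (Tsum p lam) ^ 2 := by
  rw [Tsum_one_sub lam, mul_pow, quadraticChar_sq_one (neg_ne_zero.mpr one_ne_zero), one_mul]

lemma sum_sq_cubic (hp2 : p ≠ 2) {lam : ZMod p} (hlam0 : lam ≠ 0) (hlam1 : lam ≠ 1) :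
    ∑ x : ZMod p, (quadraticChar (ZMod p) (x * (x - 1) * (x - lam))) ^ 2 = (p : ℤ) - 3 := by
  classical
  rw [Finset.sum_congr rfl (fun x (_ : x ∈ univ) => quadChar_sq_ite (x * (x - 1) * (x - lam)))]
  rw [Finset.sum_ite, Finset.sum_const, Finset.sum_const, smul_zero, zero_add, nsmul_eq_mul,
    mul_one]
  have hf0 : (univ : Finset (ZMod p)).filter (fun x => x * (x - 1) * (x - lam) = 0)
      = {0, 1, lam} := by
    ext x
    simp only [Finset.mem_filter, mem_univ, true_and, Finset.mem_insert, Finset.mem_singleton,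
      mul_eq_zero, sub_eq_zero]
    tauto
  have h01 : (0 : ZMod p) ≠ 1 := fun h => one_ne_zero h.symm
  have hcard3 : ({0, 1, lam} : Finset (ZMod p)).card = 3 := by
    rw [Finset.card_insert_of_notMem (by simp [h01, Ne.symm hlam0]),
      Finset.card_insert_of_notMem (by simp [Ne.symm hlam1]), Finset.card_singleton]
  have hfe : (univ : Finset (ZMod p)).filter (fun x => ¬ x * (x - 1) * (x - lam) = 0)
      = univ \ ((univ : Finset (ZMod p)).filter (fun x => x * (x - 1) * (x - lam) = 0)) := by
    ext x; simp [Finset.mem_sdiff]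
  rw [hfe, Finset.card_sdiff_of_subset (Finset.subset_univ _), hf0, hcard3, Finset.card_univ, ZMod.card]
  have hp3 : 3 ≤ p := by
    have h2 : 2 ≤ p := (Fact.out : p.Prime).two_le
    rcases Nat.lt_or_ge p 3 with h | h
    · interval_cases p <;> omega
    · exact h
  push_cast [Nat.cast_sub hp3]
  ring

lemma Tsum_even (hp2 : p ≠ 2) {lam : ZMod p} (hlam0 : lam ≠ 0) (hlam1 : lam ≠ 1) :
    Even (Tsum p lam) := by
  rw [Int.even_iff]
  have h1 : Tsum p lam % 2 = (∑ x : ZMod p,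
      (quadraticChar (ZMod p) (x * (x - 1) * (x - lam))) ^ 2) % 2 := by
    rw [Tsum, Finset.sum_int_mod, Finset.sum_int_mod
      (f := fun x => (quadraticChar (ZMod p) (x * (x - 1) * (x - lam))) ^ 2)]
    congr 1
    refine Finset.sum_congr rfl (fun x _ => ?_)
    by_cases hv : x * (x - 1) * (x - lam) = 0
    · rw [hv, quadraticChar_zero]
      norm_num
    · rcases quadraticChar_dichotomy hv with h | h <;> rw [h] <;> decide
  rw [h1, sum_sq_cubic hp2 hlam0 hlam1]
  have hpodd : p % 2 = 1 := p_odd hp2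
  have : ((p : ℤ)) % 2 = 1 := by
    have := congrArg (fun n : ℕ => (n : ℤ)) hpodd
    push_cast at this
    omega
  omega

end Aux6

section Aux7

variable {p : ℕ} [Fact p.Prime]

lemma cnt_odd (hp2 : p ≠ 2) {θ lam : ZMod p} (hθ : θ ≠ 0) (hlam0 : lam ≠ 0)
    (hlam1 : lam ≠ 1) : Odd (cnt p θ lam) := by
  have h := cnt_int hp2 θ lam
  have hT := Tsum_even hp2 hlam0 hlam1
  have hEv : Even (quadraticChar (ZMod p) θ * Tsum p lam) := hT.mul_left _
  have hpodd : Odd (p : ℤ) := by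
    rw [Int.odd_iff]
    have := p_odd hp2
    omega
  have : Odd ((cnt p θ lam : ℤ)) := by
    rw [h]
    exact hpodd.add_even hEv
  exact Int.odd_coe_nat _ |>.mp this

lemma cnt_le (hp2 : p ≠ 2) (θ lam : ZMod p) : cnt p θ lam ≤ 2 * p := by
  rw [cnt_eq_sum]
  have hb : ∀ c : ZMod p, Fintype.card {y : ZMod p // y ^ 2 = c} ≤ 2 := by
    intro c
    have h := card_sqrts hp2 c
    have hχ : quadraticChar (ZMod p) c ≤ 1 := by
      by_cases hc : c = 0
      · rw [hc, quadraticChar_zero]; norm_num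
      · rcases quadraticChar_dichotomy hc with h' | h' <;> rw [h'] <;> norm_num
    have : (Fintype.card {y : ZMod p // y ^ 2 = c} : ℤ) ≤ 2 := by omega
    exact_mod_cast this
  calc ∑ x : ZMod p, Fintype.card {y : ZMod p // y ^ 2 = θ * x * (x - 1) * (x - lam)}
      ≤ ∑ _x : ZMod p, 2 := Finset.sum_le_sum (fun x _ => hb _)
    _ = 2 * p := by rw [Finset.sum_const, card_univ, ZMod.card, smul_eq_mul, mul_comm]

lemma sqrt_lt_p (hp17 : 17 ≤ p) : Nat.sqrt (4 * p) < p := by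
  by_contra h
  push_neg at h
  have h1 : Nat.sqrt (4 * p) * Nat.sqrt (4 * p) ≤ 4 * p := by
    have := Nat.sqrt_le' (4 * p); rwa [pow_two] at this
  have h2 : p * p ≤ Nat.sqrt (4 * p) * Nat.sqrt (4 * p) := Nat.mul_le_mul h h
  have h3 : p * p ≤ 4 * p := le_trans h2 h1
  have : p ≤ 4 := Nat.le_of_mul_le_mul_right (by omega) (by omega : 0 < p)
  omega

lemma key_ineq {n : ℕ} (hn : 43 ≤ n) :
    ((n : ℤ) ^ 2 - 2 * n - 1) < 2 * ((n : ℤ) - Nat.sqrt (4 * n)) ^ 2 := by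
  have h1 : Nat.sqrt (4 * n) * Nat.sqrt (4 * n) ≤ 4 * n := by
    have := Nat.sqrt_le' (4 * n); rwa [pow_two] at this
  have h2 : 4 * n < (Nat.sqrt (4 * n) + 1) * (Nat.sqrt (4 * n) + 1) := by
    have := Nat.lt_succ_sqrt' (4 * n); rwa [Nat.succ_eq_add_one, pow_two] at this
  have h13 : 13 ≤ Nat.sqrt (4 * n) := by
    have h169 : 13 * 13 ≤ 4 * n := by omega
    exact Nat.le_sqrt'.mpr h169
  set s := Nat.sqrt (4 * n)
  have h1' : (s : ℤ) * s ≤ 4 * n := by exact_mod_cast h1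
  have h2' : 4 * (n : ℤ) ≤ (s : ℤ) * s + 2 * s := by
    have hexp : (s + 1) * (s + 1) = s * s + 2 * s + 1 := by ring
    have : 4 * n ≤ s * s + 2 * s := by omega
    exact_mod_cast this
  have h13' : (13 : ℤ) ≤ s := by exact_mod_cast h13
  nlinarith [sq_nonneg ((s : ℤ) * s - 4 * n), sq_nonneg (4 * (n : ℤ) - s * s - 2 * s),
    mul_nonneg (sub_nonneg.mpr h13') (sub_nonneg.mpr h13'),
    mul_le_mul_of_nonneg_left h2' (by linarith : (0:ℤ) ≤ 2 * s)]

lemma pair_sum_le (f : ZMod p → ℤ) (hf : ∀ x, 0 ≤ f x) {a b : ZMod p} (hab : a ≠ b) :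
    f a + f b ≤ ∑ x : ZMod p, f x := by
  have : ∑ x ∈ ({a, b} : Finset (ZMod p)), f x = f a + f b := Finset.sum_pair hab
  rw [← this]
  exact Finset.sum_le_sum_of_subset_of_nonneg (Finset.subset_univ _) (fun x _ _ => hf x)

lemma triple_sum_le (f : ZMod p → ℤ) (hf : ∀ x, 0 ≤ f x) {a b c : ZMod p}
    (hab : a ≠ b) (hac : a ≠ c) (hbc : b ≠ c) :
    f a + f b + f c ≤ ∑ x : ZMod p, f x := by
  have h1 : ∑ x ∈ ({a, b, c} : Finset (ZMod p)), f x = f a + (f b + f c) := by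
    rw [Finset.sum_insert (by simp [hab, hac]), Finset.sum_pair hbc]
  have h2 : f a + f b + f c = f a + (f b + f c) := by ring
  rw [h2, ← h1]
  exact Finset.sum_le_sum_of_subset_of_nonneg (Finset.subset_univ _) (fun x _ _ => hf x)

end Aux7

section DecFacts

lemma dec23C : ∀ l : ZMod 23, ¬ l * (1 - l) = 1 := by decide
lemma dec23B : ∀ l : ZMod 23, 1 - l = l → l = 12 := by decide
lemma e23sub : (1 - (-1) : ZMod 23) = 2 := by decide
lemma e23m2 : (2 : ZMod 23) * 12 = 1 := by decide
lemma e23m12 : (12 : ZMod 23) * 2 = 1 := by decide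
lemma d23a : (-1 : ZMod 23) ≠ 2 := by decide
lemma d23b : (-1 : ZMod 23) ≠ 12 := by decide
lemma d23c : (2 : ZMod 23) ≠ 12 := by decide
lemma d23d : (12 : ZMod 23) ≠ 2 := by decide
lemma d23e : (12 : ZMod 23) ≠ 1 - 2 := by decide
lemma d23f : (2 : ZMod 23) ≠ 1 - 2 := by decide

lemma dec31C : ∀ l : ZMod 31, l * (1 - l) = 1 → l = 6 ∨ l = 26 := by decide
lemma dec31B : ∀ l : ZMod 31, 1 - l = l → l = 16 := by decide
lemma e31sub : (1 - (-1) : ZMod 31) = 2 := by decide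
lemma e31m2 : (2 : ZMod 31) * 16 = 1 := by decide
lemma e31m16 : (16 : ZMod 31) * 2 = 1 := by decide
lemma d31a : (-1 : ZMod 31) ≠ 2 := by decide
lemma d31b : (-1 : ZMod 31) ≠ 16 := by decide
lemma d31c : (2 : ZMod 31) ≠ 16 := by decide
lemma d31d : (16 : ZMod 31) ≠ 2 := by decide
lemma d31e : (16 : ZMod 31) ≠ 1 - 2 := by decide
lemma d31f : (2 : ZMod 31) ≠ 1 - 2 := by decide
lemma h31sub6 : (1 - 6 : ZMod 31) = 26 := by decide

set_option maxRecDepth 40000 in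
lemma cnt31val : ((Finset.univ : Finset (ZMod 31 × ZMod 31)).filter
    (fun P => P.2 ^ 2 = 1 * P.1 * (P.1 - 1) * (P.1 - 6))).card = 27 := by decide

end DecFacts

section Aux8

lemma sqrt_eq_of {n k : ℕ} (h1 : k * k ≤ n) (h2 : n < (k + 1) * (k + 1)) :
    Nat.sqrt n = k := by
  have ha : k ≤ Nat.sqrt n := Nat.le_sqrt'.mpr (by rwa [pow_two])
  have hb : Nat.sqrt n < k + 1 := by
    by_contra h
    push_neg at h
    have hs : Nat.sqrt n * Nat.sqrt n ≤ n := by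
      have := Nat.sqrt_le' n; rwa [pow_two] at this
    have := Nat.mul_le_mul h h
    omega
  omega

lemma cnt_as_filter (p : ℕ) [Fact p.Prime] (θ lam : ZMod p) :
    cnt p θ lam = ((Finset.univ : Finset (ZMod p × ZMod p)).filter
      (fun P => P.2 ^ 2 = θ * P.1 * (P.1 - 1) * (P.1 - lam))).card := by
  rw [cnt, Nat.card_eq_fintype_card, Fintype.card_subtype]

set_option maxRecDepth 40000 in
lemma cnt_ne_sqrt {p : ℕ} [Fact p.Prime] (hp17 : 17 ≤ p) {θ lam : ZMod p}
    (hθ : θ ≠ 0) (hlam0 : lam ≠ 0) (hlam1 : lam ≠ 1) :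
    cnt p θ lam ≠ Nat.sqrt (4 * p) := by
  intro hbad
  have hp2 : p ≠ 2 := by omega
  have hci := cnt_int hp2 θ lam
  have h1 : quadraticChar (ZMod p) θ * Tsum p lam = (Nat.sqrt (4 * p) : ℤ) - p := by
    rw [hbad] at hci; linarith
  have hT2 : (Tsum p lam) ^ 2 = ((p : ℤ) - Nat.sqrt (4 * p)) ^ 2 := by
    have h2 : (Tsum p lam) ^ 2 = (quadraticChar (ZMod p) θ * Tsum p lam) ^ 2 := by
      rw [mul_pow, quadraticChar_sq_one hθ, one_mul]
    rw [h2, h1]; ring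
  have hodd := cnt_odd hp2 hθ hlam0 hlam1
  have hsodd : ¬ Even (Nat.sqrt (4 * p)) := by
    rw [hbad] at hodd
    exact Nat.not_even_iff_odd.mpr hodd
  have hsm := second_moment (p := p) hp2
  have hTnn : ∀ mu : ZMod p, 0 ≤ (Tsum p mu) ^ 2 := fun mu => sq_nonneg _
  have hIinv : (Tsum p lam⁻¹) ^ 2 = ((p : ℤ) - Nat.sqrt (4 * p)) ^ 2 := by
    rw [Tsum_inv_sq hlam0, hT2]
  have hIsub : (Tsum p (1 - lam)) ^ 2 = ((p : ℤ) - Nat.sqrt (4 * p)) ^ 2 := by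
    rw [Tsum_one_sub_sq, hT2]
  rcases lt_or_ge p 43 with hsmall | hbig
  swap
  · -- p ≥ 43 : pair argument
    have hki := key_ineq (by omega : 43 ≤ p)
    by_cases hA : lam⁻¹ = lam
    · -- lam = -1, use pair {lam, 1 - lam}
      have h2 : lam * lam = 1 := by rw [← mul_inv_cancel₀ hlam0, hA]
      rcases mul_self_eq_one_iff.mp h2 with h | h
      · exact hlam1 h
      have hne : lam ≠ 1 - lam := by
        rw [h]
        intro hcontra
        have h3 : ((3 : ℕ) : ZMod p) = 0 := by push_cast; linear_combination -hcontra
        have h5 : p ∣ 3 := (ZMod.natCast_eq_zero_iff 3 p).mp h3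
        have := Nat.le_of_dvd (by norm_num) h5
        omega
      have hpair := pair_sum_le (fun mu => (Tsum p mu) ^ 2) hTnn hne
      simp only [hT2, hIsub] at hpair
      linarith
    · have hpair := pair_sum_le (fun mu => (Tsum p mu) ^ 2) hTnn (Ne.symm hA)
      simp only [hT2, hIinv] at hpair
      linarith
  · -- 17 ≤ p < 43
    have hIsubinv : (Tsum p (1 - lam⁻¹)) ^ 2 = ((p : ℤ) - Nat.sqrt (4 * p)) ^ 2 := by
      rw [Tsum_one_sub_sq, hIinv]
    have hIinvsub : (Tsum p (1 - lam)⁻¹) ^ 2 = ((p : ℤ) - Nat.sqrt (4 * p)) ^ 2 := by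
      by_cases h1l : 1 - lam = 0
      · rw [h1l]; rw [h1l] at hIsub; simpa using hIsub
      · rw [Tsum_inv_sq h1l, hIsub]
    interval_cases p
    case _ => exact hsodd (by rw [sqrt_eq_of (by norm_num : 8 * 8 ≤ 4 * 17) (by norm_num)]; decide)
    case _ => exact absurd (Fact.out : Nat.Prime 18) (by decide)
    case _ => exact hsodd (by rw [sqrt_eq_of (by norm_num : 8 * 8 ≤ 4 * 19) (by norm_num)]; decide)
    case _ => exact absurd (Fact.out : Nat.Prime 20) (by decide)
    case _ => exact absurd (Fact.out : Nat.Prime 21) (by decide)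
    case _ => exact absurd (Fact.out : Nat.Prime 22) (by decide)
    case _ =>
      -- p = 23
      have hs9 : Nat.sqrt (4 * 23) = 9 := sqrt_eq_of (by norm_num) (by norm_num)
      rw [hs9] at hT2 hIinv hIsub hIsubinv hIinvsub
      norm_num at hT2 hIinv hIsub hIsubinv hIinvsub hsm
      by_cases hC : lam * (1 - lam) = 1
      · have hdec := dec23C
        exact absurd hC (hdec lam)
      · by_cases hA : lam⁻¹ = lam
        · -- lam = -1 : triple {-1, 2, 2⁻¹ = 12}
          have h2 : lam * lam = 1 := by rw [← mul_inv_cancel₀ hlam0, hA]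
          rcases mul_self_eq_one_iff.mp h2 with h | h
          · exact hlam1 h
          subst h
          have e2 := e23sub
          have e2m := e23m2
          have e2i : ((2 : ZMod 23))⁻¹ = 12 := inv_eq_of_mul_eq_one_right e2m
          rw [e2] at hIsub hIinvsub
          rw [e2i] at hIinvsub
          have d1 := d23a
          have d2 := d23b
          have d3 := d23c
          have htr := triple_sum_le (fun mu => (Tsum 23 mu) ^ 2) hTnn d1 d2 d3
          simp only [hT2, hIsub, hIinvsub] at htr
          linarith
        · by_cases hB : 1 - lam = lam
          · -- lam = 12 : triple {12, 12⁻¹ = 2, 1 - 2}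
            have hdec := dec23B
            have hl : lam = 12 := hdec lam hB
            subst hl
            have e12m := e23m12
            have e12 : ((12 : ZMod 23))⁻¹ = 2 := inv_eq_of_mul_eq_one_right e12m
            rw [e12] at hIinv hIsubinv
            have d1 := d23d
            have d2 := d23e
            have d3 := d23f
            have htr := triple_sum_le (fun mu => (Tsum 23 mu) ^ 2) hTnn d1 d2 d3
            simp only [hT2, hIinv, hIsubinv] at htr
            linarith
          · -- generic triple {lam, lam⁻¹, 1 - lam}
            have hC' : lam⁻¹ ≠ 1 - lam := by
              intro h
              exact hC (by rw [← h, mul_inv_cancel₀ hlam0])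
            have htr := triple_sum_le (fun mu => (Tsum 23 mu) ^ 2) hTnn
              (Ne.symm hA) (Ne.symm hB) hC'
            simp only [hT2, hIinv, hIsub] at htr
            linarith
    case _ => exact absurd (Fact.out : Nat.Prime 24) (by decide)
    case _ => exact absurd (Fact.out : Nat.Prime 25) (by decide)
    case _ => exact absurd (Fact.out : Nat.Prime 26) (by decide)
    case _ => exact absurd (Fact.out : Nat.Prime 27) (by decide)
    case _ => exact absurd (Fact.out : Nat.Prime 28) (by decide)
    case _ => exact hsodd (by rw [sqrt_eq_of (by norm_num : 10 * 10 ≤ 4 * 29) (by norm_num)]; decide)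
    case _ => exact absurd (Fact.out : Nat.Prime 30) (by decide)
    case _ =>
      -- p = 31
      have hs11 : Nat.sqrt (4 * 31) = 11 := sqrt_eq_of (by norm_num) (by norm_num)
      rw [hs11] at hT2 hIinv hIsub hIsubinv hIinvsub
      norm_num at hT2 hIinv hIsub hIsubinv hIinvsub hsm
      by_cases hC : lam * (1 - lam) = 1
      · -- lam = 6 or 26 : use the explicit count of E_6
        have hdec := dec31C
        have hl : lam = 6 ∨ lam = 26 := hdec lam hC
        have hT6 : (Tsum 31 6) ^ 2 = 400 := by
          rcases hl with h | h
          · rw [← h]; exact hT2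
          · have h26 := h31sub6
            have h6 := Tsum_one_sub_sq (p := 31) (lam := 6)
            rw [h26] at h6
            rw [h] at hT2
            rw [← h6]; exact hT2
        have hc6 : cnt 31 1 6 = 27 := by
          rw [cnt_as_filter]
          exact cnt31val
        have hci6 := cnt_int (by norm_num : (31 : ℕ) ≠ 2) (1 : ZMod 31) 6
        rw [hc6, map_one, one_mul] at hci6
        have hT6v : Tsum 31 6 = -4 := by push_cast at hci6; linarith
        rw [hT6v] at hT6
        norm_num at hT6
      · by_cases hA : lam⁻¹ = lam
        · have h2 : lam * lam = 1 := by rw [← mul_inv_cancel₀ hlam0, hA]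
          rcases mul_self_eq_one_iff.mp h2 with h | h
          · exact hlam1 h
          subst h
          have e2 := e31sub
          have e2m := e31m2
          have e2i : ((2 : ZMod 31))⁻¹ = 16 := inv_eq_of_mul_eq_one_right e2m
          rw [e2] at hIsub hIinvsub
          rw [e2i] at hIinvsub
          have d1 := d31a
          have d2 := d31b
          have d3 := d31c
          have htr := triple_sum_le (fun mu => (Tsum 31 mu) ^ 2) hTnn d1 d2 d3
          simp only [hT2, hIsub, hIinvsub] at htr
          linarith
        · by_cases hB : 1 - lam = lam
          · have hdec := dec31B
            have hl : lam = 16 := hdec lam hB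
            subst hl
            have e16m := e31m16
            have e16 : ((16 : ZMod 31))⁻¹ = 2 := inv_eq_of_mul_eq_one_right e16m
            rw [e16] at hIinv hIsubinv
            have d1 := d31d
            have d2 := d31e
            have d3 := d31f
            have htr := triple_sum_le (fun mu => (Tsum 31 mu) ^ 2) hTnn d1 d2 d3
            simp only [hT2, hIinv, hIsubinv] at htr
            linarith
          · have hC' : lam⁻¹ ≠ 1 - lam := by
              intro h
              exact hC (by rw [← h, mul_inv_cancel₀ hlam0])
            have htr := triple_sum_le (fun mu => (Tsum 31 mu) ^ 2) hTnn
              (Ne.symm hA) (Ne.symm hB) hC'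
            simp only [hT2, hIinv, hIsub] at htr
            linarith
    case _ => exact absurd (Fact.out : Nat.Prime 32) (by decide)
    case _ => exact absurd (Fact.out : Nat.Prime 33) (by decide)
    case _ => exact absurd (Fact.out : Nat.Prime 34) (by decide)
    case _ => exact absurd (Fact.out : Nat.Prime 35) (by decide)
    case _ => exact absurd (Fact.out : Nat.Prime 36) (by decide)
    case _ => exact hsodd (by rw [sqrt_eq_of (by norm_num : 12 * 12 ≤ 4 * 37) (by norm_num)]; decide)
    case _ => exact absurd (Fact.out : Nat.Prime 38) (by decide)
    case _ => exact absurd (Fact.out : Nat.Prime 39) (by decide)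
    case _ => exact absurd (Fact.out : Nat.Prime 40) (by decide)
    case _ => exact hsodd (by rw [sqrt_eq_of (by norm_num : 12 * 12 ≤ 4 * 41) (by norm_num)]; decide)
    case _ => exact absurd (Fact.out : Nat.Prime 42) (by decide)

end Aux8

/-- For a prime `p ≥ 17`, the twisted Legendre curve `E_λ^(θ) : y² = θx(x-1)(x-λ)` attains
the Serre bound over `F_p` iff `(-θ)^m · H_p(λ) = -(⌊2√p⌋ mod p)` in `F_p`. -/
theorem stmt1 (p : ℕ) (hp : Nat.Prime p) (hp17 : 17 ≤ p)
    (θ lam : ZMod p) (hθ : θ ≠ 0) (hlam0 : lam ≠ 0) (hlam1 : lam ≠ 1) :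
    1 + Nat.card {P : ZMod p × ZMod p // P.2 ^ 2 = θ * P.1 * (P.1 - 1) * (P.1 - lam)} =
        p + 1 + Nat.sqrt (4 * p) ↔
      (-θ) ^ ((p - 1) / 2) *
          ∑ i ∈ Finset.range ((p - 1) / 2 + 1),
            (((p - 1) / 2).choose i : ZMod p) ^ 2 * lam ^ i =
        -(Nat.sqrt (4 * p) : ZMod p) := by
  haveI : Fact p.Prime := ⟨hp⟩
  have hp2 : p ≠ 2 := by omega
  have hcnt : Nat.card {P : ZMod p × ZMod p //
      P.2 ^ 2 = θ * P.1 * (P.1 - 1) * (P.1 - lam)} = cnt p θ lam := rfl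
  rw [hcnt]
  have hz := cnt_zmod hp2 θ lam
  constructor
  · intro h
    have hc : cnt p θ lam = p + Nat.sqrt (4 * p) := by omega
    have hcast : ((cnt p θ lam : ℕ) : ZMod p) = (Nat.sqrt (4 * p) : ZMod p) := by
      rw [hc]
      push_cast
      rw [ZMod.natCast_self]
      ring
    rw [hz] at hcast
    linear_combination -hcast
  · intro h
    have hzz : ((cnt p θ lam : ℕ) : ZMod p) = ((Nat.sqrt (4 * p) : ℕ) : ZMod p) := by
      rw [hz]
      linear_combination -h
    have hmod : cnt p θ lam ≡ Nat.sqrt (4 * p) [MOD p] :=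
      (ZMod.natCast_eq_natCast_iff _ _ _).mp hzz
    have hle := cnt_le hp2 θ lam
    have hslt : Nat.sqrt (4 * p) < p := sqrt_lt_p hp17
    have hne := cnt_ne_sqrt hp17 hθ hlam0 hlam1
    have hs8 : 8 ≤ Nat.sqrt (4 * p) := by
      have h64 : 8 * 8 ≤ 4 * p := by omega
      exact Nat.le_sqrt'.mpr (by rwa [pow_two])
    rcases le_or_gt (cnt p θ lam) (Nat.sqrt (4 * p)) with hcs | hsc
    · have hd : p ∣ Nat.sqrt (4 * p) - cnt p θ lam := (Nat.modEq_iff_dvd' hcs).mp hmod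
      have hlt : Nat.sqrt (4 * p) - cnt p θ lam < p := by omega
      have := Nat.eq_zero_of_dvd_of_lt hd hlt
      omega
    · have hd : p ∣ cnt p θ lam - Nat.sqrt (4 * p) :=
        (Nat.modEq_iff_dvd' (le_of_lt hsc)).mp hmod.symm
      obtain ⟨k, hk⟩ := hd
      rcases k with _ | _ | k
      · omega
      · omega
      · have hbig : p * 2 ≤ p * (k + 1 + 1) := Nat.mul_le_mul_left p (by omega)
        omega
end

section
/- Let p be an odd prime, θ ∈ F_p \ {0} and λ ∈ F_p \ {0,1}. If the twisted Legendre curve E_λ^{(θ)} is maximal over the field F_{p²} with p² elements, i.e. #E_λ^{(θ)}(F_{p²}) = p² + 1 + 2p, then p ≡ 3 (mod 4). -/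
open Finset


private lemma klein_four_dvd {α : Type*} [DecidableEq α] (φ τ : α → α)
    (hφφ : ∀ x, φ (φ x) = x) (hττ : ∀ x, τ (τ x) = x)
    (hcomm : ∀ x, φ (τ x) = τ (φ x)) :
    ∀ D : Finset α, (∀ x ∈ D, φ x ∈ D) → (∀ x ∈ D, τ x ∈ D) →
    (∀ x ∈ D, φ x ≠ x) → (∀ x ∈ D, τ x ≠ x) → (∀ x ∈ D, φ (τ x) ≠ x) → 4 ∣ D.card := by
  intro D
  induction D using Finset.strongInduction with
  | _ D ih =>
    intro hφD hτD hf1 hf2 hf3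
    rcases D.eq_empty_or_nonempty with rfl | ⟨x, hx⟩
    · simp
    have hφinj : ∀ a b : α, φ a = φ b → a = b := fun a b h => by
      rw [← hφφ a, h, hφφ]
    have hτinj : ∀ a b : α, τ a = τ b → a = b := fun a b h => by
      rw [← hττ a, h, hττ]
    set O : Finset α := {x, φ x, τ x, φ (τ x)} with hO
    have hmemO : ∀ y, y ∈ O ↔ y = x ∨ y = φ x ∨ y = τ x ∨ y = φ (τ x) := by
      intro y; simp [hO]
    have hsub : O ⊆ D := by
      intro y hy
      rcases (hmemO y).1 hy with rfl | rfl | rfl | rfl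
      · exact hx
      · exact hφD x hx
      · exact hτD x hx
      · exact hφD _ (hτD x hx)
    -- distinctness
    have d1 : φ x ≠ x := hf1 x hx
    have d2 : τ x ≠ x := hf2 x hx
    have d3 : φ (τ x) ≠ x := hf3 x hx
    have d4 : φ x ≠ τ x := by
      intro h
      exact d3 (by rw [← h, hφφ])
    have d5 : φ x ≠ φ (τ x) := fun h => d2 (hφinj _ _ h.symm)
    have d6 : τ x ≠ φ (τ x) := by
      intro h
      apply d1
      have := congrArg τ h
      rw [hττ, ← hcomm, hττ] at this
      exact this.symm
    have hcardO : O.card = 4 := by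
      rw [hO]
      rw [card_insert_of_notMem (by simp [d1.symm, d2.symm, d3.symm] <;> tauto),
        card_insert_of_notMem (by simp; exact ⟨d4, d5⟩),
        card_insert_of_notMem (by simp [d6]), card_singleton]
    have hclosed : ∀ y ∈ O, φ y ∈ O ∧ τ y ∈ O := by
      intro y hy
      rcases (hmemO y).1 hy with rfl | rfl | rfl | rfl
      · exact ⟨(hmemO _).2 (by tauto), (hmemO _).2 (by tauto)⟩
      · constructor
        · exact (hmemO _).2 (Or.inl (hφφ x))
        · exact (hmemO _).2 (by rw [← hcomm]; tauto)
      · exact ⟨(hmemO _).2 (by tauto), (hmemO _).2 (Or.inl (hττ x))⟩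
      · constructor
        · exact (hmemO _).2 (by rw [hφφ]; tauto)
        · exact (hmemO _).2 (by rw [← hcomm, hττ]; tauto)
    have hD' : ∀ y ∈ D \ O, φ y ∈ D \ O ∧ τ y ∈ D \ O := by
      intro y hy
      rw [mem_sdiff] at hy
      constructor
      · rw [mem_sdiff]
        refine ⟨hφD y hy.1, fun hyO => hy.2 ?_⟩
        have := (hclosed _ hyO).1
        rwa [hφφ] at this
      · rw [mem_sdiff]
        refine ⟨hτD y hy.1, fun hyO => hy.2 ?_⟩
        have := (hclosed _ hyO).2
        rwa [hττ] at this
    have hdvd : 4 ∣ (D \ O).card := by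
      apply ih (D \ O) (Finset.sdiff_ssubset hsub ⟨x, (hmemO x).2 (by tauto)⟩)
      · exact fun y hy => (hD' y hy).1
      · exact fun y hy => (hD' y hy).2
      · exact fun y hy => hf1 y (mem_sdiff.1 hy).1
      · exact fun y hy => hf2 y (mem_sdiff.1 hy).1
      · exact fun y hy => hf3 y (mem_sdiff.1 hy).1
    have := Finset.card_sdiff_add_card_eq_card hsub
    omega


/-- If the twisted Legendre curve `E_λ^(θ)` is maximal over the field with `p²` elements,
then `p ≡ 3 (mod 4)`. -/
theorem stmt3 (p : ℕ) (hp : Nat.Prime p) (hodd : Odd p)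
    (F : Type) [Field F] [Fintype F] [Algebra (ZMod p) F] (hF : Fintype.card F = p ^ 2)
    (θ lam : ZMod p) (hθ : θ ≠ 0) (hlam0 : lam ≠ 0) (hlam1 : lam ≠ 1)
    (hmax : 1 + Nat.card {P : F × F // P.2 ^ 2 = algebraMap (ZMod p) F θ * P.1 * (P.1 - 1) *
          (P.1 - algebraMap (ZMod p) F lam)} = p ^ 2 + 1 + 2 * p) :
    p % 4 = 3 := by
  classical
  haveI : Fact p.Prime := ⟨hp⟩
  obtain ⟨k, hk⟩ := hodd
  have hp2 : p ≠ 2 := by omega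
  have hp1 : 1 ≤ p := hp.one_le
  have hinj : Function.Injective (algebraMap (ZMod p) F) := (algebraMap (ZMod p) F).injective
  haveI hchar : CharP F p := charP_of_injective_algebraMap hinj p
  have hring2 : ringChar F ≠ 2 := by rw [ringChar.eq F p]; exact hp2
  set θ' : F := algebraMap (ZMod p) F θ with hθ'def
  set l : F := algebraMap (ZMod p) F lam with hldef
  have hθ0 : θ' ≠ 0 := by
    simpa [hθ'def] using fun h => hθ (hinj (by simpa using h))
  have hl0 : l ≠ 0 := by
    simpa [hldef] using fun h => hlam0 (hinj (by simpa using h))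
  have hl1 : l ≠ 1 := by
    intro h; apply hlam1; apply hinj; rw [map_one]; exact h
  set f : F → F := fun x => θ' * x * (x - 1) * (x - l) with hfdef
  set χ : MulChar F ℤ := quadraticChar F with hχdef
  set g : F → ℤ := fun x => χ (f x) with hgdef
  -- fixed elements
  have hfixc : ∀ c : ZMod p, (algebraMap (ZMod p) F c) ^ p = algebraMap (ZMod p) F c := by
    intro c; rw [← map_pow, ZMod.pow_card]
  have hlp : l ^ p = l := hfixc lam
  have hθp : θ' ^ p = θ' := hfixc θ
  have h1p : (1 : F) ^ p = 1 := one_pow p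
  have h0p : (0 : F) ^ p = 0 := zero_pow hp.ne_zero
  have hFp : ∀ x : F, x ^ (p * p) = x := by
    intro x
    have := FiniteField.pow_card x
    rwa [hF, pow_two] at this
  have hpp : ∀ x : F, (x ^ p) ^ p = x := by
    intro x; rw [← pow_mul]; exact hFp x
  -- Frobenius on f
  have hfrob : ∀ x : F, (f x) ^ p = f (x ^ p) := by
    intro x
    simp only [hfdef]
    rw [mul_pow, mul_pow, mul_pow, sub_pow_char, sub_pow_char, one_pow, hlp, hθp]
  -- roots of f
  have hroot : ∀ x : F, f x = 0 ↔ x = 0 ∨ x = 1 ∨ x = l := by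
    intro x
    simp only [hfdef, mul_eq_zero, sub_eq_zero, mul_eq_zero]
    constructor
    · rintro (((h | h) | h) | h)
      · exact absurd h hθ0
      · tauto
      · tauto
      · tauto
    · rintro (h | h | h) <;> tauto
  -- the three roots satisfy x^p = x
  have hrootfix : ∀ x : F, f x = 0 → x ^ p = x := by
    intro x hx
    rcases (hroot x).1 hx with rfl | rfl | rfl
    · exact h0p
    · exact h1p
    · exact hlp
  -- χ of a fixed nonzero element is 1
  have hpow1 : ∀ w : F, w ≠ 0 → w ^ p = w → w ^ (p - 1) = 1 := by
    intro w hw hwp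
    have h : w ^ (p - 1) * w = 1 * w := by
      rw [← pow_succ, Nat.sub_add_cancel hp1, hwp, one_mul]
    exact mul_right_cancel₀ hw h
  have hcard2 : Fintype.card F / 2 = (p - 1) * (k + 1) := by
    have e1 : p - 1 = 2 * k := by omega
    have h2 : Fintype.card F = 2 * ((p - 1) * (k + 1)) + 1 := by
      rw [hF, e1, hk]; ring
    omega
  have hcard2' : Fintype.card F / 2 = (p + 1) * k := by
    rw [hcard2]
    have e1 : p - 1 = 2 * k := by omega
    have e2 : p + 1 = 2 * k + 2 := by omega
    rw [e1, e2]; ring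
  have hχfix : ∀ z : F, z ≠ 0 → z ^ p = z → χ z = 1 := by
    intro z hz hzp
    apply (quadraticChar_one_iff_isSquare hz).mpr
    rw [FiniteField.isSquare_iff hring2 hz, hcard2, pow_mul, hpow1 z hz hzp, one_pow]
  -- the key algebraic identity : f (l/x) = f x * (l/x^2)^2
  have hident : ∀ x : F, x ≠ 0 → f (l * x⁻¹) = f x * (l * (x⁻¹) ^ 2) ^ 2 := by
    intro x hx
    simp only [hfdef]
    field_simp
    ring
  -- g values are 0, 1 or -1 ; g(x^p) = g x and g(l/x) = g x
  have hgfrob : ∀ x : F, g (x ^ p) = g x := by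
    intro x
    by_cases hfx : f x = 0
    · have : f (x ^ p) = 0 := by rw [← hfrob, hfx, zero_pow hp.ne_zero]
      rw [hgdef]; simp only []
      rw [this, hfx]
    · have h1 : g (x ^ p) = (g x) ^ p := by
        rw [hgdef]; simp only []
        rw [← hfrob, map_pow]
      rcases quadraticChar_dichotomy (F := F) hfx with h | h
      · rw [h1, hgdef] at *; simp only [] at *; rw [h, one_pow]
      · rw [h1, hgdef] at *; simp only [] at *; rw [h, Odd.neg_one_pow ⟨k, by omega⟩]
  have hgtau : ∀ x : F, x ≠ 0 → g (l * x⁻¹) = g x := by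
    intro x hx
    rw [hgdef]; simp only []
    rw [hident x hx, map_mul]
    have : χ ((l * (x⁻¹) ^ 2) ^ 2) = 1 :=
      quadraticChar_sq_one' (by
        apply mul_ne_zero hl0
        exact pow_ne_zero _ (inv_ne_zero hx))
    rw [this, mul_one]
  -- partition of univ
  set P1 : F → Prop := fun x => x ^ p = x with hP1def
  set P2 : F → Prop := fun x => x ^ (p + 1) = l with hP2def
  set P3 : F → Prop := fun x => x ^ 2 = l with hP3def
  set s1 : Finset F := univ.filter P1 with hs1
  set t1 : Finset F := univ.filter (fun x => ¬ P1 x) with ht1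
  set s2 : Finset F := t1.filter P2 with hs2
  set t2 : Finset F := t1.filter (fun x => ¬ P2 x) with ht2
  set s3 : Finset F := t2.filter P3 with hs3
  set s4 : Finset F := t2.filter (fun x => ¬ P3 x) with hs4
  have hsplit : ∀ h : F → ℤ, ∑ x, h x = (∑ x ∈ s1, h x) + ((∑ x ∈ s2, h x) +
      ((∑ x ∈ s3, h x) + (∑ x ∈ s4, h x))) := by
    intro h
    simp only [hs1, hs2, hs3, hs4, ht2, ht1]
    rw [← Finset.sum_filter_add_sum_filter_not univ P1 h]
    congr 1
    rw [← Finset.sum_filter_add_sum_filter_not (univ.filter (fun x => ¬ P1 x)) P2 h]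
    congr 1
    rw [← Finset.sum_filter_add_sum_filter_not
      ((univ.filter (fun x => ¬ P1 x)).filter (fun x => ¬ P2 x)) P3 h]
  -- sums over the pieces
  -- piece 1
  have hzeros : s1.filter (fun x => f x = 0) = ({0, 1, l} : Finset F) := by
    ext y
    simp only [hs1, mem_filter, mem_univ, true_and, mem_insert, mem_singleton]
    constructor
    · rintro ⟨-, h⟩; exact (hroot y).1 h
    · intro h
      refine ⟨?_, (hroot y).2 h⟩
      rcases h with rfl | rfl | rfl
      · exact h0p
      · exact h1p
      · exact hlp
  have hcard3 : (s1.filter (fun x => f x = 0)).card = 3 := by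
    rw [hzeros]
    rw [card_insert_of_notMem (by simp [hl0.symm]), card_insert_of_notMem (by simp [hl1.symm]),
      card_singleton]
  have hsum1 : ∑ x ∈ s1, g x = (∑ x ∈ s1, (1 : ℤ)) - 3 := by
    rw [← Finset.sum_filter_add_sum_filter_not s1 (fun x => f x = 0) g,
        ← Finset.sum_filter_add_sum_filter_not s1 (fun x => f x = 0) (fun _ => (1 : ℤ))]
    have e1 : ∑ x ∈ s1.filter (fun x => f x = 0), g x = 0 := by
      apply Finset.sum_eq_zero
      intro x hx
      rw [hgdef]; simp only []
      rw [(mem_filter.1 hx).2, hχdef, MulChar.map_zero]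
    have e2 : ∑ x ∈ s1.filter (fun x => ¬ f x = 0), g x
        = ∑ x ∈ s1.filter (fun x => ¬ f x = 0), (1 : ℤ) := by
      apply Finset.sum_congr rfl
      intro x hx
      rw [mem_filter] at hx
      obtain ⟨hx1, hx2⟩ := hx
      rw [hs1, mem_filter] at hx1
      exact hχfix (f x) hx2 (by rw [hfrob, hx1.2])
    rw [e1, e2, Finset.sum_const, Finset.sum_const, hcard3]
    push_cast
    ring
  -- piece 2 : x^(p+1) = l, x not fixed
  have hsum2 : ∑ x ∈ s2, g x = ∑ x ∈ s2, (1 : ℤ) := by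
    apply Finset.sum_congr rfl
    intro x hx
    rw [hs2, mem_filter, ht1, mem_filter] at hx
    obtain ⟨⟨-, hnfix⟩, hnorm⟩ := hx
    have hx0 : x ≠ 0 := fun h => hnfix (by rw [h]; exact h0p)
    have hfx : f x ≠ 0 := fun h => hnfix (hrootfix x h)
    have hxp : x ^ p = l * x⁻¹ := by
      rw [eq_mul_inv_iff_mul_eq₀ hx0, ← pow_succ]
      exact hnorm
    set w : F := f x * (l * (x⁻¹) ^ 2) with hwdef
    have hw0 : w ≠ 0 := mul_ne_zero hfx (mul_ne_zero hl0 (pow_ne_zero _ (inv_ne_zero hx0)))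
    have hzw : (f x) ^ (p + 1) = w ^ 2 := by
      rw [pow_succ, hfrob, hxp, hident x hx0, hwdef]
      ring
    have hwp : w ^ p = w := by
      have e1 : w ^ p = f (x ^ p) * (l * ((x ^ p)⁻¹) ^ 2) := by
        rw [hwdef, mul_pow, hfrob, mul_pow, hlp, pow_right_comm, inv_pow x p]
      rw [e1, hxp, hident x hx0, hwdef]
      field_simp
    have : χ (f x) = 1 := by
      apply (quadraticChar_one_iff_isSquare hfx).mpr
      rw [FiniteField.isSquare_iff hring2 hfx, hcard2', pow_mul, hzw, ← pow_mul,
        mul_comm 2 k, pow_mul]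
      have e1 : w ^ (2 * k) = w ^ (p - 1) := by congr 1; omega
      rw [← pow_mul, mul_comm k 2, e1, hpow1 w hw0 hwp]
    rw [hgdef]; simp only []
    rw [this]
  -- piece 3 : x^2 = l, x not fixed
  have hsum3 : ∑ x ∈ s3, g x = ∑ x ∈ s3, (1 : ℤ) := by
    apply Finset.sum_congr rfl
    intro x hx
    rw [hs3, mem_filter, ht2, mem_filter, ht1, mem_filter] at hx
    obtain ⟨⟨⟨-, hnfix⟩, -⟩, hsq⟩ := hx
    have hx1 : x ≠ 1 := fun h => hnfix (by rw [h]; exact h1p)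
    have hsq' : x ^ 2 = l := hsq
    have hfval : f x = (-(θ' * l)) * (x - 1) ^ 2 := by
      simp only [hfdef]
      rw [← hsq']
      ring
    rw [hgdef]; simp only []
    rw [hfval, map_mul]
    have e1 : χ ((x - 1) ^ 2) = 1 := quadraticChar_sq_one' (sub_ne_zero.2 hx1)
    have e2 : χ (-(θ' * l)) = 1 := by
      apply hχfix _ (neg_ne_zero.2 (mul_ne_zero hθ0 hl0))
      rw [Odd.neg_pow ⟨k, by omega⟩, mul_pow, hθp, hlp]
    rw [e1, e2, mul_one]
  -- piece 4 : free Klein action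
  set φ : F → F := fun x => x ^ p with hφdef
  set τ : F → F := fun x => l * x⁻¹ with hτdef
  have hφφ : ∀ x : F, φ (φ x) = x := by
    intro x; rw [hφdef]; simp only []; rw [← pow_mul]; exact hFp x
  have hττ : ∀ x : F, τ (τ x) = x := by
    intro x
    rw [hτdef]; simp only []
    rcases eq_or_ne x 0 with rfl | hx
    · simp
    · field_simp
  have hcommφτ : ∀ x : F, φ (τ x) = τ (φ x) := by
    intro x
    rw [hφdef, hτdef]; simp only []
    rw [mul_pow, hlp, inv_pow]
  set D : Finset F := s4.filter (fun x => g x = -1) with hD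
  have hmemD : ∀ x, x ∈ D ↔ (¬ x ^ p = x ∧ ¬ x ^ (p + 1) = l ∧ ¬ x ^ 2 = l ∧ g x = -1) := by
    intro x
    rw [hD, mem_filter, hs4, mem_filter, ht2, mem_filter, ht1, mem_filter, hP1def, hP2def, hP3def]
    simp only [mem_univ, true_and]
    tauto
  have hDx0 : ∀ x ∈ D, x ≠ 0 := by
    intro x hx h
    exact ((hmemD x).1 hx).1 (by rw [h]; exact h0p)
  have hDφ : ∀ x ∈ D, φ x ∈ D := by
    intro x hx
    obtain ⟨h1, h2, h3, h4⟩ := (hmemD x).1 hx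
    rw [hmemD, hφdef]; simp only []
    refine ⟨?_, ?_, ?_, ?_⟩
    · intro h
      apply h1
      rw [hpp] at h
      exact h.symm
    · intro h
      apply h2
      have e : (x ^ p) ^ (p + 1) = x ^ (p + 1) := by
        calc (x ^ p) ^ (p + 1) = x ^ (p * p) * x ^ p := by
              rw [← pow_mul, ← pow_add, Nat.mul_succ]
          _ = x * x ^ p := by rw [hFp]
          _ = x ^ (p + 1) := by rw [pow_succ']
      rwa [e] at h
    · intro h
      apply h3
      have e1 : (x ^ 2) ^ p = l := by rw [pow_right_comm]; exact h
      have e2 := hpp (x ^ 2)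
      rw [e1, hlp] at e2
      exact e2.symm
    · rw [hgfrob x]; exact h4
  have hDτ : ∀ x ∈ D, τ x ∈ D := by
    intro x hx
    obtain ⟨h1, h2, h3, h4⟩ := (hmemD x).1 hx
    have hx0 : x ≠ 0 := hDx0 x hx
    rw [hmemD, hτdef]; simp only []
    refine ⟨?_, ?_, ?_, ?_⟩
    · intro h
      apply h1
      rw [mul_pow, hlp, inv_pow] at h
      have := mul_left_cancel₀ hl0 h
      rw [inv_inj] at this
      exact this
    · intro h
      apply h2
      rw [mul_pow, inv_pow, pow_succ l p, hlp] at h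
      -- h : l * l * (x ^ (p+1))⁻¹ = l
      have hxp0 : x ^ (p + 1) ≠ 0 := pow_ne_zero _ hx0
      field_simp at h
      exact h.symm
    · intro h
      apply h3
      rw [mul_pow, inv_pow, pow_two l] at h
      have hxp0 : x ^ 2 ≠ 0 := pow_ne_zero _ hx0
      field_simp at h
      exact h.symm
    · rw [hgtau x hx0]; exact h4
  have hDf1 : ∀ x ∈ D, φ x ≠ x := by
    intro x hx
    exact fun h => ((hmemD x).1 hx).1 h
  have hDf2 : ∀ x ∈ D, τ x ≠ x := by
    intro x hx h
    obtain ⟨h1, h2, h3, h4⟩ := (hmemD x).1 hx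
    have hx0 : x ≠ 0 := hDx0 x hx
    apply h3
    rw [hτdef] at h; simp only [] at h
    field_simp at h
    rw [pow_two]
    rw [← pow_two]; exact h.symm
  have hDf3 : ∀ x ∈ D, φ (τ x) ≠ x := by
    intro x hx h
    obtain ⟨h1, h2, h3, h4⟩ := (hmemD x).1 hx
    have hx0 : x ≠ 0 := hDx0 x hx
    apply h2
    rw [hφdef, hτdef] at h; simp only [] at h
    rw [mul_pow, hlp, inv_pow] at h
    -- h : l * (x ^ p)⁻¹ = x
    have hxp0 : x ^ p ≠ 0 := pow_ne_zero _ hx0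
    field_simp at h
    rw [pow_succ]
    rw [h]
  have hdvd4 : 4 ∣ D.card := by
    exact klein_four_dvd φ τ hφφ hττ hcommφτ D hDφ hDτ hDf1 hDf2 hDf3
  have hsum4 : ∑ x ∈ s4, g x = (∑ x ∈ s4, (1 : ℤ)) - 2 * D.card := by
    rw [← Finset.sum_filter_add_sum_filter_not s4 (fun x => g x = -1) g,
        ← Finset.sum_filter_add_sum_filter_not s4 (fun x => g x = -1) (fun _ => (1 : ℤ))]
    have e1 : ∑ x ∈ s4.filter (fun x => g x = -1), g x
        = -((s4.filter (fun x => g x = -1)).card : ℤ) := by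
      rw [Finset.sum_congr rfl (fun x hx => (mem_filter.1 hx).2), Finset.sum_const,
        nsmul_eq_mul]
      push_cast; ring
    have e2 : ∑ x ∈ s4.filter (fun x => ¬ g x = -1), g x
        = ((s4.filter (fun x => ¬ g x = -1)).card : ℤ) := by
      have hall : ∀ x ∈ s4.filter (fun x => ¬ g x = -1), g x = 1 := by
        intro x hx
        rw [mem_filter] at hx
        obtain ⟨hx1, hx2⟩ := hx
        rw [hs4, mem_filter, ht2, mem_filter, ht1, mem_filter] at hx1
        have hnfix : ¬ P1 x := hx1.1.1.2
        have hfx : f x ≠ 0 := fun h => hnfix (hrootfix x h)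
        simp only [hgdef] at hx2 ⊢
        rcases quadraticChar_dichotomy (F := F) hfx with h | h
        · exact h
        · exact absurd h hx2
      rw [Finset.sum_congr rfl hall, Finset.sum_const, nsmul_eq_mul]
      push_cast; ring
    rw [e1, e2]
    have hDcard : D.card = (s4.filter (fun x => g x = -1)).card := by rw [hD]
    rw [Finset.sum_const, Finset.sum_const, hDcard]
    push_cast; ring
  -- total sum
  have htot : (∑ x ∈ s1, (1 : ℤ)) + ((∑ x ∈ s2, (1 : ℤ)) +
      ((∑ x ∈ s3, (1 : ℤ)) + (∑ x ∈ s4, (1 : ℤ)))) = (p : ℤ) ^ 2 := by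
    rw [← hsplit (fun _ => (1 : ℤ)), Finset.sum_const, card_univ, hF]
    push_cast; ring
  have hS : ∑ x : F, g x = (p : ℤ) ^ 2 - 3 - 2 * D.card := by
    rw [hsplit g, hsum1, hsum2, hsum3, hsum4]
    linarith [htot]
  -- point count
  have hcount : (Nat.card {P : F × F // P.2 ^ 2 = θ' * P.1 * (P.1 - 1) * (P.1 - l)} : ℤ)
      = ∑ x : F, (g x + 1) := by
    rw [Nat.card_eq_fintype_card,
      Fintype.card_congr (Equiv.subtypeProdEquivSigmaSubtype
        (fun (a b : F) => b ^ 2 = θ' * a * (a - 1) * (a - l))),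
      Fintype.card_sigma]
    push_cast
    apply Finset.sum_congr rfl
    intro x _
    have h1 := quadraticChar_card_sqrts hring2 (θ' * x * (x - 1) * (x - l))
    have hg : g x = quadraticChar F (θ' * x * (x - 1) * (x - l)) := rfl
    have hc : Fintype.card {b : F // b ^ 2 = θ' * x * (x - 1) * (x - l)}
        = ({y : F | y ^ 2 = θ' * x * (x - 1) * (x - l)}.toFinset).card := by
      rw [Set.toFinset_card]
      exact Fintype.card_congr (Equiv.subtypeEquivRight (fun y => Iff.rfl))
    rw [hg, hc]
    exact_mod_cast h1
  have hiso : ∑ x : F, (g x + 1) = (∑ x : F, g x) + (p : ℤ) ^ 2 := by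
    rw [Finset.sum_add_distrib, Finset.sum_const, card_univ, hF]
    push_cast; ring
  have hNat : Nat.card {P : F × F // P.2 ^ 2 = θ' * P.1 * (P.1 - 1) * (P.1 - l)}
      = p ^ 2 + 2 * p := by omega
  have hSval : ∑ x : F, g x = 2 * (p : ℤ) := by
    have := hcount
    rw [hNat, hiso] at this
    push_cast at this
    linarith
  -- final arithmetic
  obtain ⟨d, hd⟩ := hdvd4
  obtain ⟨m, hm⟩ := Nat.even_mul_succ_self k
  have hA : (p : ℤ) ^ 2 - 2 * p - 3 = 8 * d := by
    rw [hSval] at hS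
    rw [hd] at hS
    push_cast at hS
    linarith
  have hB : (p : ℤ) ^ 2 - 1 = 8 * m := by
    have : (p : ℤ) = 2 * k + 1 := by exact_mod_cast congrArg (Nat.cast : ℕ → ℤ) hk
    rw [this]
    have h2 : (k : ℤ) * (k + 1) = m + m := by exact_mod_cast congrArg (Nat.cast : ℕ → ℤ) hm
    linarith [h2]
  obtain ⟨q2, hq2⟩ : ∃ q2 : ℤ, (p : ℤ) ^ 2 = q2 := ⟨_, rfl⟩
  rw [hq2] at hA hB
  omega
end

section
/- Let p be an odd prime and m = (p-1)/2. The set {λ ∈ F_p : H_p(λ) = 0} is empty if and only if p ≡ 1 (mod 4). -/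
open Finset

-- power sum lemma
lemma pow_sum_zmod (p : ℕ) (hp : p.Prime) [NeZero p] (k : ℕ) (hk1 : 1 ≤ k) (hk2 : k < 2*(p-1)) :
    (∑ x : ZMod p, x ^ k) = if k = p - 1 then -1 else 0 := by
  haveI : Fact p.Prime := ⟨hp⟩
  have hcard : Fintype.card (ZMod p) = p := ZMod.card p
  rcases lt_trichotomy k (p-1) with h | h | h
  · rw [if_neg (by omega)]
    exact FiniteField.sum_pow_lt_card_sub_one (ZMod p) k (by rwa [hcard])
  · subst h
    rw [if_pos rfl]
    have h1 : ∀ x : ZMod p, x ^ (p-1) = 1 - (if x = 0 then 1 else 0) := by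
      intro x
      split_ifs with hx
      · subst hx; rw [zero_pow (by have := hp.two_le; omega)]; ring
      · rw [ZMod.pow_card_sub_one_eq_one hx]; ring
    rw [Finset.sum_congr rfl (fun x _ => h1 x), Finset.sum_sub_distrib,
      Finset.sum_ite_eq' Finset.univ (0 : ZMod p) (fun _ => (1:ZMod p)),
      if_pos (Finset.mem_univ _), Finset.sum_const, Finset.card_univ, hcard]
    simp [ZMod.natCast_self]
  · rw [if_neg (by omega)]
    have hstep : ∀ x : ZMod p, x ^ k = x ^ (k - (p-1)) := by
      intro x
      rcases eq_or_ne x 0 with rfl | hx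
      · rw [zero_pow (by omega), zero_pow (by omega)]
      · have h2 : x ^ k = x ^ (p-1) * x ^ (k - (p-1)) := by
          rw [← pow_add]; congr 1; omega
        rw [h2, ZMod.pow_card_sub_one_eq_one hx, one_mul]
    rw [Finset.sum_congr rfl (fun x _ => hstep x)]
    exact FiniteField.sum_pow_lt_card_sub_one (ZMod p) _ (by rw [hcard]; omega)

lemma H_zero (p : ℕ) [NeZero p] (m : ℕ) :
    ∑ i ∈ range (m+1), (m.choose i : ZMod p) ^ 2 * (0:ZMod p) ^ i = 1 := by
  rw [Finset.sum_eq_single 0]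
  · simp
  · intro i _ hi
    rw [zero_pow hi, mul_zero]
  · intro h; simp at h

lemma H_one (p : ℕ) (hp : p.Prime) [NeZero p] (m : ℕ) (hm : 2 * m = p - 1) :
    ∑ i ∈ range (m+1), (m.choose i : ZMod p) ^ 2 * (1:ZMod p) ^ i ≠ 0 := by
  have key : ∑ i ∈ range (m+1), (m.choose i)^2 = (2*m).choose m := by
    rw [two_mul, Nat.add_choose_eq, Finset.Nat.sum_antidiagonal_eq_sum_range_succ_mk]
    refine Finset.sum_congr rfl fun i hi => ?_
    rw [Finset.mem_range] at hi
    rw [Nat.choose_symm (by omega), sq]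
  have h2 : ∑ i ∈ range (m+1), (m.choose i : ZMod p) ^ 2 * (1:ZMod p) ^ i
      = (((2*m).choose m : ℕ) : ZMod p) := by
    rw [← key]
    push_cast
    refine Finset.sum_congr rfl fun i _ => ?_
    rw [one_pow, mul_one]
  rw [h2, Ne, ZMod.natCast_eq_zero_iff]
  intro hdvd
  have h4 := Nat.choose_mul_factorial_mul_factorial (show m ≤ 2*m by omega)
  have h5 : p ∣ Nat.factorial (2*m) :=
    hdvd.trans ⟨Nat.factorial m * Nat.factorial (2*m-m), by rw [← h4]; ring⟩
  have h6 : p ≤ 2*m := (Nat.Prime.dvd_factorial hp).1 h5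
  have := hp.two_le
  omega

lemma two_ne_zero_zmod (p : ℕ) (hp : p.Prime) (hodd : Odd p) : (2 : ZMod p) ≠ 0 := by
  have : ((2:ℕ) : ZMod p) ≠ 0 := by
    rw [Ne, ZMod.natCast_eq_zero_iff]
    intro h
    have h2 := (Nat.prime_dvd_prime_iff_eq hp Nat.prime_two).1 h
    subst h2
    rcases hodd with ⟨k, hk⟩
    omega
  simpa using this

lemma root_neg_one (p : ℕ) (hp : p.Prime) (hodd : Odd p) [NeZero p] (m : ℕ) (hm : Odd m) :
    ∑ i ∈ range (m+1), (m.choose i : ZMod p) ^ 2 * (-1:ZMod p) ^ i = 0 := by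
  haveI : Fact p.Prime := ⟨hp⟩
  set S := ∑ i ∈ range (m+1), (m.choose i : ZMod p) ^ 2 * (-1:ZMod p) ^ i with hS
  have hrefl : S = -S := by
    rw [hS]
    nth_rewrite 1 [← Finset.sum_range_reflect]
    rw [← Finset.sum_neg_distrib]
    refine Finset.sum_congr rfl fun i hi => ?_
    rw [Finset.mem_range] at hi
    have hi' : i ≤ m := by omega
    simp only [Nat.add_sub_cancel]
    rw [Nat.choose_symm hi']
    have h1 : ((-1:ZMod p))^(m-i) * (-1:ZMod p)^i = (-1:ZMod p)^m := by
      rw [← pow_add]; congr 1; omega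
    have h2 : ((-1:ZMod p))^i * (-1:ZMod p)^i = 1 := by
      rw [← pow_add, ← two_mul, pow_mul, neg_one_sq, one_pow]
    have h3 : ((-1:ZMod p))^(m-i) = -(-1:ZMod p)^i := by
      have hm' : (-1:ZMod p)^m = -1 := Odd.neg_one_pow hm
      calc ((-1:ZMod p))^(m-i)
          = ((-1:ZMod p))^(m-i) * (((-1:ZMod p))^i * (-1:ZMod p)^i) := by rw [h2, mul_one]
        _ = (-1:ZMod p)^m * (-1:ZMod p)^i := by rw [← mul_assoc, h1]
        _ = -(-1:ZMod p)^i := by rw [hm']; ring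
    rw [h3]; ring
  have h4 : (2:ZMod p) * S = 0 := by linear_combination hrefl
  rcases mul_eq_zero.1 h4 with h | h
  · exact absurd h (two_ne_zero_zmod p hp hodd)
  · exact h

lemma expand_sum (p : ℕ) (hp : p.Prime) [NeZero p] (m : ℕ) (hm : 2 * m = p - 1)
    (hm1 : 1 ≤ m) (lam : ZMod p) :
    ∑ x : ZMod p, (x * (x - 1) * (x - lam)) ^ m
      = -(-1 : ZMod p) ^ m * ∑ i ∈ range (m+1), (m.choose i : ZMod p) ^ 2 * lam ^ i := by
  have key : ∀ x : ZMod p, (x * (x - 1) * (x - lam)) ^ m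
      = ∑ i ∈ range (m+1), ∑ j ∈ range (m+1),
          ((m.choose i : ZMod p) * m.choose j * (-1)^(m-i) * (-lam)^(m-j)) * x ^ (m + i + j) := by
    intro x
    have h1 : (x - 1) ^ m = ∑ i ∈ range (m+1), x ^ i * (-1:ZMod p) ^ (m-i) * m.choose i := by
      rw [sub_eq_add_neg, add_pow]
    have h2 : (x - lam) ^ m = ∑ j ∈ range (m+1), x ^ j * (-lam) ^ (m-j) * m.choose j := by
      rw [sub_eq_add_neg, add_pow]
    rw [mul_pow, mul_pow, h1, h2, mul_assoc, Finset.sum_mul_sum, Finset.mul_sum]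
    refine Finset.sum_congr rfl fun i _ => ?_
    rw [Finset.mul_sum]
    refine Finset.sum_congr rfl fun j _ => ?_
    rw [pow_add, pow_add]
    ring
  rw [Finset.sum_congr rfl (fun x _ => key x), Finset.sum_comm]
  have inner : ∀ i ∈ range (m+1),
      (∑ x : ZMod p, ∑ j ∈ range (m+1),
          ((m.choose i : ZMod p) * m.choose j * (-1)^(m-i) * (-lam)^(m-j)) * x ^ (m + i + j))
      = -((-1:ZMod p)^m * (m.choose i : ZMod p)^2 * lam ^ i) := by
    intro i hi
    rw [Finset.mem_range] at hi
    have hi' : i ≤ m := by omega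
    rw [Finset.sum_comm]
    have hj : ∀ j ∈ range (m+1),
        (∑ x : ZMod p, ((m.choose i : ZMod p) * m.choose j * (-1)^(m-i) * (-lam)^(m-j)) * x ^ (m + i + j))
        = if m + i + j = p - 1 then -((m.choose i : ZMod p) * m.choose j * (-1)^(m-i) * (-lam)^(m-j)) else 0 := by
      intro j hj
      rw [Finset.mem_range] at hj
      rw [← Finset.mul_sum, pow_sum_zmod p hp _ (by omega) (by omega)]
      split_ifs <;> ring
    rw [Finset.sum_congr rfl hj]
    rw [Finset.sum_eq_single (m - i)]
    · rw [if_pos (by omega)]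
      rw [Nat.choose_symm hi', Nat.sub_sub_self hi', neg_pow lam i]
      have : ((-1:ZMod p)^(m-i)) * (-1:ZMod p)^i = (-1:ZMod p)^m := by
        rw [← pow_add]; congr 1; omega
      rw [sq]
      calc -((m.choose i : ZMod p) * (m.choose i) * (-1)^(m-i) * ((-1)^i * lam ^ i))
          = -((m.choose i : ZMod p) * (m.choose i) * ((-1:ZMod p)^(m-i) * (-1)^i) * lam ^ i) := by ring
        _ = -((-1:ZMod p)^m * ((m.choose i : ZMod p) * m.choose i) * lam ^ i) := by rw [this]; ring
    · intro j hjr hne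
      rw [Finset.mem_range] at hjr
      rw [if_neg (by omega)]
    · intro h
      exact absurd (Finset.mem_range.2 (by omega)) h
  rw [Finset.sum_congr rfl inner, Finset.sum_neg_distrib, Finset.mul_sum]
  rw [neg_eq_iff_eq_neg, ← Finset.sum_neg_distrib]
  refine Finset.sum_congr rfl fun i _ => ?_
  ring

lemma even_card_of_involution {α : Type*} [DecidableEq α] (s : Finset α) (g : α → α)
    (hmem : ∀ a ∈ s, g a ∈ s) (hinv : ∀ a ∈ s, g (g a) = a) (hne : ∀ a ∈ s, g a ≠ a) :
    Even s.card := by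
  have h := Finset.sum_involution (f := fun _ => (1 : ZMod 2)) (s := s) (fun a _ => g a)
    (fun a ha => by show (1:ZMod 2) + 1 = 0; decide) (fun a ha _ => hne a ha) (fun a ha => hmem a ha)
    (fun a ha => hinv a ha)
  rw [Finset.sum_const, nsmul_eq_mul, mul_one] at h
  rw [ZMod.natCast_eq_zero_iff] at h
  exact even_iff_two_dvd.2 h

lemma no_root (p : ℕ) (hp : p.Prime) (h4 : p % 4 = 1) (lam : ZMod p) :
    ∑ i ∈ range ((p-1)/2 + 1), ((((p-1)/2).choose i : ZMod p)) ^ 2 * lam ^ i ≠ 0 := by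
  haveI : Fact p.Prime := ⟨hp⟩
  haveI : NeZero p := ⟨hp.pos.ne'⟩
  intro hH
  set m := (p-1)/2 with hmdef
  have hp5 : 5 ≤ p := by have := hp.two_le; omega
  have hm : 2 * m = p - 1 := by omega
  have hm1 : 2 ≤ m := by omega
  have hmeven : Even m := ⟨(p-1)/4, by omega⟩
  have hone_ne : (1 : ZMod p) ≠ -1 := by
    intro h
    have h2 : ((2:ℕ) : ZMod p) = 0 := by push_cast; linear_combination h
    rw [ZMod.natCast_eq_zero_iff] at h2
    have := Nat.le_of_dvd (by norm_num) h2
    omega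
  have htwo : (2 : ZMod p) ≠ 0 := by
    intro h; exact hone_ne (by linear_combination h)
  have hlam0 : lam ≠ 0 := by
    rintro rfl
    rw [H_zero p m] at hH
    exact one_ne_zero hH
  have hlam1 : lam ≠ 1 := by
    rintro rfl
    exact H_one p hp m hm hH
  set f : ZMod p → ZMod p := fun x => x * (x - 1) * (x - lam) with hfdef
  set g : ZMod p → ZMod p := fun x => f x ^ m with hgdef
  have hS : ∑ x : ZMod p, g x = 0 := by
    rw [hgdef]
    simp only [hfdef]
    rw [expand_sum p hp m hm (by omega) lam, hH, mul_zero]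
  have hg0 : ∀ x : ZMod p, f x = 0 → g x = 0 := by
    intro x h
    rw [hgdef]; simp only; rw [h, zero_pow (by omega)]
  have hg_cases : ∀ x : ZMod p, g x = 0 ∨ g x = 1 ∨ g x = -1 := by
    intro x
    rcases eq_or_ne (f x) 0 with h | h
    · exact Or.inl (hg0 x h)
    · right
      have hsq : g x * g x = 1 := by
        rw [hgdef]; simp only
        rw [← pow_add, ← two_mul, hm, ZMod.pow_card_sub_one_eq_one h]
      exact mul_self_eq_one_iff.1 hsq
  have hgne : ∀ x : ZMod p, g x = 1 → f x ≠ 0 := by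
    intro x h1 h0
    rw [hg0 x h0] at h1
    exact one_ne_zero h1.symm
  have hgne' : ∀ x : ZMod p, g x = -1 → f x ≠ 0 := by
    intro x h1 h0
    rw [hg0 x h0] at h1
    exact one_ne_zero (show (1:ZMod p) = 0 by linear_combination h1)
  set A : Finset (ZMod p) := univ.filter (fun x => g x = 1) with hAdef
  set B : Finset (ZMod p) := univ.filter (fun x => g x = -1) with hBdef
  have hsum : ∑ x : ZMod p, g x = (A.card : ZMod p) - B.card := by
    have hterm : ∀ x : ZMod p, g x =
        (if g x = 1 then (1:ZMod p) else 0) - (if g x = -1 then (1:ZMod p) else 0) := by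
      intro x
      rcases hg_cases x with h | h | h <;> rw [h]
      · rw [if_neg (fun hh => one_ne_zero (hh.symm)), if_neg (fun hh => one_ne_zero (show (1:ZMod p) = 0 by linear_combination hh))]
        ring
      · rw [if_pos rfl, if_neg hone_ne]; ring
      · rw [if_neg (fun hh => hone_ne hh.symm), if_pos rfl]; ring
    rw [Finset.sum_congr rfl (fun x _ => hterm x), Finset.sum_sub_distrib,
      Finset.sum_boole, Finset.sum_boole]
  have hABcast : (A.card : ZMod p) = (B.card : ZMod p) := by
    rw [hsum] at hS
    linear_combination hS
  have hZcard : (univ.filter (fun x : ZMod p => f x = 0)).card = 3 := by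
    have hZ : univ.filter (fun x : ZMod p => f x = 0) = ({0, 1, lam} : Finset (ZMod p)) := by
      ext x
      rw [hfdef]
      simp only [Finset.mem_filter, Finset.mem_univ, true_and, Finset.mem_insert,
        Finset.mem_singleton, mul_eq_zero, sub_eq_zero]
      tauto
    rw [hZ, Finset.card_insert_of_notMem (by simp [Ne, zero_ne_one, Ne.symm hlam0]),
      Finset.card_insert_of_notMem (by simp [Ne.symm hlam1]), Finset.card_singleton]
  have hABunion : A ∪ B = univ.filter (fun x => ¬ (f x = 0)) := by
    ext x
    simp only [hAdef, hBdef, Finset.mem_union, Finset.mem_filter, Finset.mem_univ, true_and]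
    constructor
    · rintro (h | h)
      exacts [hgne x h, hgne' x h]
    · intro h
      rcases hg_cases x with h0 | h1 | h1
      · exfalso
        have hsq : g x * g x = 1 := by
          rw [hgdef]; simp only
          rw [← pow_add, ← two_mul, hm, ZMod.pow_card_sub_one_eq_one h]
        rw [h0, mul_zero] at hsq
        exact one_ne_zero hsq.symm
      · exact Or.inl h1
      · exact Or.inr h1
  have hdisj : Disjoint A B := by
    rw [Finset.disjoint_left]
    intro x hxA hxB
    rw [hAdef, Finset.mem_filter] at hxA
    rw [hBdef, Finset.mem_filter] at hxB
    rw [hxA.2] at hxB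
    exact hone_ne hxB.2
  have hcardAB : A.card + B.card = p - 3 := by
    rw [← Finset.card_union_of_disjoint hdisj, hABunion, Finset.filter_not,
      Finset.card_sdiff_of_subset (Finset.filter_subset _ _), Finset.card_univ, ZMod.card, hZcard]
  have hABeq : A.card = B.card := by
    rw [ZMod.natCast_eq_natCast_iff'] at hABcast
    have hA3 : A.card < p := by omega
    have hB3 : B.card < p := by omega
    rwa [Nat.mod_eq_of_lt hA3, Nat.mod_eq_of_lt hB3] at hABcast
  have hAodd : ¬ Even A.card := by
    rintro ⟨k, hk⟩
    omega
  -- involution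
  have hAmem : ∀ x, x ∈ A ↔ g x = 1 := by
    intro x; rw [hAdef, Finset.mem_filter]; simp
  have hAx0 : ∀ x ∈ A, x ≠ 0 := by
    intro x hx hx0
    rw [hAmem] at hx
    subst hx0
    exact hgne 0 hx (by rw [hfdef]; ring)
  have hkey : ∀ x : ZMod p, x ≠ 0 → f (lam * x⁻¹) = (lam * x⁻¹ * x⁻¹)^2 * f x := by
    intro x hx
    rw [hfdef]
    simp only
    field_simp
    ring
  have hiotaA : ∀ x ∈ A, lam * x⁻¹ ∈ A := by
    intro x hx
    have hx0 := hAx0 x hx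
    rw [hAmem] at hx ⊢
    have hu : (lam * x⁻¹ * x⁻¹) ≠ 0 :=
      mul_ne_zero (mul_ne_zero hlam0 (inv_ne_zero hx0)) (inv_ne_zero hx0)
    rw [hgdef] at hx ⊢
    simp only at hx ⊢
    rw [hkey x hx0, mul_pow, ← pow_mul, hm, ZMod.pow_card_sub_one_eq_one hu, one_mul]
    exact hx
  have hiotainv : ∀ x : ZMod p, x ≠ 0 → lam * (lam * x⁻¹)⁻¹ = x := by
    intro x hx
    field_simp
  -- the set of fixed points
  set F : Finset (ZMod p) := A.filter (fun x => x^2 = lam) with hFdef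
  have hFsub : F ⊆ A := Finset.filter_subset _ _
  have hFmem : ∀ x, x ∈ F ↔ (x ∈ A ∧ x^2 = lam) := by
    intro x; rw [hFdef, Finset.mem_filter]
  have hFeven : Even F.card := by
    rcases F.eq_empty_or_nonempty with hF | ⟨s, hs⟩
    · rw [hF]; simp
    · rw [hFmem] at hs
      obtain ⟨hsA, hs2⟩ := hs
      have hs0 : s ≠ 0 := hAx0 s hsA
      have hsne : s ≠ -s := by
        intro h
        apply hs0
        have h2 : (2:ZMod p) * s = 0 := by linear_combination h
        rcases mul_eq_zero.1 h2 with h' | h'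
        · exact absurd h' htwo
        · exact h'
      have hnegs : -s ∈ A := by
        have hfs : f s * f (-s) = (lam * (lam - 1))^2 := by
          rw [hfdef]
          simp only
          rw [← hs2]
          ring
        have hgs : g s = 1 := (hAmem s).1 hsA
        have hmul : g s * g (-s) = 1 := by
          rw [hgdef]
          simp only
          rw [← mul_pow, hfs, ← pow_mul, hm]
          exact ZMod.pow_card_sub_one_eq_one (mul_ne_zero hlam0 (sub_ne_zero.2 hlam1))
        rw [hgs, one_mul] at hmul
        exact (hAmem _).2 hmul
      have hF2 : F = {s, -s} := by
        ext t
        rw [hFmem]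
        simp only [Finset.mem_insert, Finset.mem_singleton]
        constructor
        · rintro ⟨htA, ht2⟩
          have : t^2 = s^2 := by rw [ht2, hs2]
          exact sq_eq_sq_iff_eq_or_eq_neg.1 this
        · rintro (rfl | rfl)
          · exact ⟨hsA, hs2⟩
          · exact ⟨hnegs, by rw [neg_pow, neg_one_sq, one_mul]; exact hs2⟩
      rw [hF2, Finset.card_insert_of_notMem (by simpa using hsne), Finset.card_singleton]
      exact ⟨1, rfl⟩
  have hAFeven : Even (A \ F).card := by
    refine even_card_of_involution _ (fun x => lam * x⁻¹) ?_ ?_ ?_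
    · intro x hx
      rw [Finset.mem_sdiff] at hx ⊢
      obtain ⟨hxA, hxF⟩ := hx
      have hx0 := hAx0 x hxA
      refine ⟨hiotaA x hxA, ?_⟩
      intro hFmem'
      rw [hFmem] at hFmem'
      apply hxF
      rw [hFmem]
      refine ⟨hxA, ?_⟩
      have h2 := hFmem'.2
      field_simp at h2
      have h3 : lam * lam = lam * x^2 := by linear_combination lam * h2
      exact (mul_left_cancel₀ hlam0 h3).symm
    · intro x hx
      rw [Finset.mem_sdiff] at hx
      exact hiotainv x (hAx0 x hx.1)
    · intro x hx
      rw [Finset.mem_sdiff] at hx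
      obtain ⟨hxA, hxF⟩ := hx
      intro heq
      apply hxF
      rw [hFmem]
      refine ⟨hxA, ?_⟩
      have hx0 := hAx0 x hxA
      field_simp at heq
      linear_combination -heq
  have : Even A.card := by
    have h := Finset.card_sdiff_add_card_eq_card hFsub
    rw [← h]
    exact hAFeven.add hFeven
  exact hAodd this


/-- The set `{λ ∈ F_p : H_p(λ) = 0}` is empty iff `p ≡ 1 (mod 4)`. -/
theorem stmt9 (p : ℕ) (hp : Nat.Prime p) (hodd : Odd p) :
    {lam : ZMod p | ∑ i ∈ Finset.range ((p - 1) / 2 + 1),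
        (((p - 1) / 2).choose i : ZMod p) ^ 2 * lam ^ i = 0} = ∅ ↔ p % 4 = 1 := by
  haveI : NeZero p := ⟨hp.pos.ne'⟩
  constructor
  · intro hempty
    by_contra hne
    have h3 : p % 4 = 3 := by
      rcases hodd with ⟨k, hk⟩
      omega
    have hmodd : Odd ((p - 1) / 2) := ⟨(p - 3) / 4, by have := hp.two_le; omega⟩
    have hroot := root_neg_one p hp (by rcases h3 with _; exact ⟨(p-1)/2, by have := hp.two_le; omega⟩) ((p-1)/2) hmodd
    have hmem : (-1 : ZMod p) ∈ {lam : ZMod p | ∑ i ∈ Finset.range ((p - 1) / 2 + 1),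
        (((p - 1) / 2).choose i : ZMod p) ^ 2 * lam ^ i = 0} := hroot
    rw [hempty] at hmem
    exact hmem
  · intro h1
    rw [Set.eq_empty_iff_forall_notMem]
    intro lam hlam
    exact no_root p hp h1 lam hlam
end

section
/- Let p be an odd prime, m = (p-1)/2, θ ∈ F_p \ {0} and λ ∈ F_p \ {0,1}. Let N = #{(x,y) ∈ F_p × F_p : y² = θx(x-1)(x-λ)} be the number of affine points of the twisted Legendre curve over F_p. Then the image of N in F_p equals -(-θ)^m · H_p(λ); equivalently, #E_λ^{(θ)}(F_p) = N + 1 satisfies #E_λ^{(θ)}(F_p) ≡ 1 - (-θ)^m H_p(λ) (mod p). -/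
open Finset

/-- Sum of `x^k` over a prime field. -/
lemma aux_sum_pow (p : ℕ) [Fact p.Prime] (k : ℕ) (hk : k ≠ 0) :
    ∑ x : ZMod p, x ^ k = if p - 1 ∣ k then -1 else 0 := by
  classical
  have h1 : ∑ x : ZMod p, x ^ k = ∑ x : (ZMod p)ˣ, ((x : ZMod p)) ^ k := by
    let φ : (ZMod p)ˣ ↪ ZMod p := ⟨fun x => x, fun _ _ h => Units.ext h⟩
    have huniv : Finset.univ.map φ = Finset.univ \ {(0 : ZMod p)} := by
      ext x
      simp only [Finset.mem_map, Finset.mem_univ, Function.Embedding.coeFn_mk, true_and,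
        Finset.mem_sdiff, Finset.mem_singleton, φ]; exact isUnit_iff_ne_zero
    calc ∑ x : ZMod p, x ^ k
        = ∑ x ∈ Finset.univ \ {(0 : ZMod p)}, x ^ k := by
          rw [← Finset.sum_sdiff (Finset.subset_univ {(0 : ZMod p)}), Finset.sum_singleton,
            zero_pow hk, add_zero]
      _ = _ := by rw [← huniv, Finset.sum_map]; rfl
  have h2 := FiniteField.sum_pow_units (ZMod p) k
  rw [ZMod.card] at h2
  rw [h1, ← h2]

/-- Number of square roots of `c` in `ZMod p`, mod `p`. -/
lemma aux_card_sqrt (p : ℕ) [Fact p.Prime] (hodd : Odd p) (c : ZMod p) :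
    (((Finset.univ.filter fun y : ZMod p => y ^ 2 = c).card : ℕ) : ZMod p)
      = 1 + c ^ ((p - 1) / 2) := by
  classical
  have hp := (Fact.out : p.Prime)
  obtain ⟨t, ht⟩ := hodd
  have h2le := hp.two_le
  have hp3 : 3 ≤ p := by omega
  have hm : (p - 1) / 2 = p / 2 := by omega
  have hm0 : (p - 1) / 2 ≠ 0 := by omega
  by_cases hc : c = 0
  · subst hc
    have : (Finset.univ.filter fun y : ZMod p => y ^ 2 = 0) = {0} := by
      ext y
      simp [pow_eq_zero_iff (n := 2) (by norm_num)]
    rw [this]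
    simp [zero_pow hm0]
  · by_cases hsq : IsSquare c
    · obtain ⟨d, rfl⟩ := hsq
      have hd : d ≠ 0 := by rintro rfl; simp at hc
      have hdd : d ≠ -d := by
        intro h
        apply hd
        have h2 : (2 : ZMod p) * d = 0 := by linear_combination h
        have h2ne : (2 : ZMod p) ≠ 0 := by
          have : ((2 : ℕ) : ZMod p) ≠ 0 := by
            rw [Ne, ZMod.natCast_eq_zero_iff]
            intro h
            have := Nat.le_of_dvd (by norm_num) h
            omega
          simpa using this
        exact (mul_eq_zero.mp h2).resolve_left h2ne
      have hfil : (Finset.univ.filter fun y : ZMod p => y ^ 2 = d * d) = {d, -d} := by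
        ext y
        simp only [Finset.mem_filter, Finset.mem_univ, true_and, Finset.mem_insert,
          Finset.mem_singleton]
        constructor
        · intro h
          have : (y - d) * (y + d) = 0 := by linear_combination h
          rcases mul_eq_zero.mp this with h' | h'
          · left; linear_combination h'
          · right; linear_combination h'
        · rintro (rfl | rfl) <;> ring
      have h1 : (d * d) ^ ((p - 1) / 2) = 1 := by
        rw [hm]
        exact (ZMod.euler_criterion p hc).mp ⟨d, rfl⟩
      rw [hfil, Finset.card_insert_of_notMem (by simpa using hdd), Finset.card_singleton, h1]
      norm_num
    · have hfil : (Finset.univ.filter fun y : ZMod p => y ^ 2 = c) = ∅ := by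
        ext y
        simp only [Finset.mem_filter, Finset.mem_univ, true_and, Finset.notMem_empty, iff_false]
        intro h
        exact hsq ⟨y, by rw [← h]; ring⟩
      have hne1 : c ^ ((p - 1) / 2) ≠ 1 := by
        rw [hm]
        intro h
        exact hsq ((ZMod.euler_criterion p hc).mpr h)
      have := ZMod.pow_div_two_eq_neg_one_or_one p hc
      rw [← hm] at this
      rcases this with h | h
      · exact absurd h hne1
      · rw [hfil, h]; simp

/-- The key character-sum evaluation. -/
lemma aux_key (p : ℕ) [Fact p.Prime] (hodd : Odd p) (lam : ZMod p) :
    ∑ x : ZMod p, x ^ ((p - 1) / 2) * (x - 1) ^ ((p - 1) / 2) * (x - lam) ^ ((p - 1) / 2)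
      = -((-1 : ZMod p) ^ ((p - 1) / 2) *
          ∑ i ∈ Finset.range ((p - 1) / 2 + 1),
            ((((p - 1) / 2).choose i : ZMod p)) ^ 2 * lam ^ i) := by
  classical
  have hp := (Fact.out : p.Prime)
  obtain ⟨t, ht⟩ := hodd
  have h2le := hp.two_le
  set m := (p - 1) / 2 with hmdef
  have hm1 : 1 ≤ m := by omega
  have h2m : p - 1 = 2 * m := by omega
  have hx1 : ∀ x : ZMod p, (x - 1) ^ m
      = ∑ i ∈ Finset.range (m + 1), x ^ i * (-1 : ZMod p) ^ (m - i) * (m.choose i : ZMod p) := by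
    intro x
    rw [sub_eq_add_neg, add_pow]
  have hx2 : ∀ x : ZMod p, (x - lam) ^ m
      = ∑ j ∈ Finset.range (m + 1), x ^ j * (-lam) ^ (m - j) * (m.choose j : ZMod p) := by
    intro x
    rw [sub_eq_add_neg, add_pow]
  -- the coefficient
  set c : ℕ → ℕ → ZMod p :=
    fun i j => (-1 : ZMod p) ^ (m - i) * (m.choose i : ZMod p)
      * ((-lam) ^ (m - j) * (m.choose j : ZMod p)) with hc
  have step1 : ∑ x : ZMod p, x ^ m * (x - 1) ^ m * (x - lam) ^ m
      = ∑ i ∈ Finset.range (m + 1), ∑ j ∈ Finset.range (m + 1),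
          c i j * ∑ x : ZMod p, x ^ (m + (i + j)) := by
    have : ∑ x : ZMod p, x ^ m * (x - 1) ^ m * (x - lam) ^ m
        = ∑ x : ZMod p, ∑ i ∈ Finset.range (m + 1), ∑ j ∈ Finset.range (m + 1),
            c i j * x ^ (m + (i + j)) := by
      refine Finset.sum_congr rfl fun x _ => ?_
      rw [hx1 x, hx2 x, mul_assoc, Finset.sum_mul_sum, Finset.mul_sum]
      refine Finset.sum_congr rfl fun i _ => ?_
      rw [Finset.mul_sum]
      refine Finset.sum_congr rfl fun j _ => ?_
      rw [hc, pow_add, pow_add]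
      ring
    rw [this, Finset.sum_comm]
    refine Finset.sum_congr rfl fun i _ => ?_
    rw [Finset.sum_comm]
    refine Finset.sum_congr rfl fun j _ => ?_
    rw [← Finset.mul_sum]
  rw [step1]
  have step2 : ∀ i ∈ Finset.range (m + 1),
      (∑ j ∈ Finset.range (m + 1), c i j * ∑ x : ZMod p, x ^ (m + (i + j)))
        = -(c i (m - i)) := by
    intro i hi
    rw [Finset.mem_range] at hi
    have hi' : i ≤ m := by omega
    have hsum : ∀ j ∈ Finset.range (m + 1),
        c i j * (∑ x : ZMod p, x ^ (m + (i + j)))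
          = if j = m - i then -(c i (m - i)) else 0 := by
      intro j hj
      rw [Finset.mem_range] at hj
      have hj' : j ≤ m := by omega
      rw [aux_sum_pow p (m + (i + j)) (by omega)]
      by_cases hcase : j = m - i
      · subst hcase
        rw [if_pos (by rw [h2m]; exact ⟨1, by omega⟩), if_pos rfl]
        ring
      · rw [if_neg ?_, if_neg hcase, mul_zero]
        intro hdvd
        rw [h2m] at hdvd
        obtain ⟨q, hq⟩ := hdvd
        rcases q with _ | _ | q
        · omega
        · omega
        · exfalso
          have h4 : 4 * m ≤ 2 * m * (q + 1 + 1) := by nlinarith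
          omega
    rw [Finset.sum_congr rfl hsum, Finset.sum_ite_eq' (Finset.range (m + 1)) (m - i)]
    rw [if_pos (Finset.mem_range.mpr (by omega))]
  rw [Finset.sum_congr rfl step2]
  rw [Finset.sum_neg_distrib]
  congr 1
  rw [Finset.mul_sum]
  refine Finset.sum_congr rfl fun i hi => ?_
  rw [Finset.mem_range] at hi
  have hi' : i ≤ m := by omega
  rw [hc]
  simp only []
  rw [Nat.sub_sub_self hi', Nat.choose_symm hi', neg_pow lam i]
  calc (-1 : ZMod p) ^ (m - i) * (m.choose i : ZMod p)
        * ((-1 : ZMod p) ^ i * lam ^ i * (m.choose i : ZMod p))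
      = ((-1 : ZMod p) ^ (m - i) * (-1 : ZMod p) ^ i)
          * ((m.choose i : ZMod p) ^ 2 * lam ^ i) := by ring
    _ = (-1 : ZMod p) ^ m * ((m.choose i : ZMod p) ^ 2 * lam ^ i) := by
        rw [← pow_add, Nat.sub_add_cancel hi']

/-- The affine point count `N` of the twisted Legendre curve over `F_p` satisfies
`N ≡ -(-θ)^m H_p(λ) (mod p)`. -/
theorem stmt10 (p : ℕ) (hp : Nat.Prime p) (hodd : Odd p)
    (θ lam : ZMod p) (hθ : θ ≠ 0) (hlam0 : lam ≠ 0) (hlam1 : lam ≠ 1) :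
    ((Nat.card {P : ZMod p × ZMod p // P.2 ^ 2 = θ * P.1 * (P.1 - 1) * (P.1 - lam)} : ℕ) :
        ZMod p) =
      -((-θ) ^ ((p - 1) / 2) *
        ∑ i ∈ Finset.range ((p - 1) / 2 + 1),
          (((p - 1) / 2).choose i : ZMod p) ^ 2 * lam ^ i) := by
  haveI : Fact p.Prime := ⟨hp⟩
  classical
  have hodd' := hodd
  set m := (p - 1) / 2 with hmdef
  have hA : ((Nat.card {P : ZMod p × ZMod p //
        P.2 ^ 2 = θ * P.1 * (P.1 - 1) * (P.1 - lam)} : ℕ) : ZMod p)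
      = ∑ x : ZMod p, (1 + (θ * x * (x - 1) * (x - lam)) ^ m) := by
    rw [Nat.card_eq_fintype_card, Fintype.card_subtype, Finset.card_filter,
      Fintype.sum_prod_type]
    push_cast
    refine Finset.sum_congr rfl fun x _ => ?_
    have h := aux_card_sqrt p hodd' (θ * x * (x - 1) * (x - lam))
    rw [Finset.card_filter] at h
    push_cast at h
    exact h
  rw [hA, Finset.sum_add_distrib]
  have hzero : (∑ _x : ZMod p, (1 : ZMod p)) = 0 := by
    simp [Finset.card_univ, ZMod.card, ZMod.natCast_self]
  rw [hzero, zero_add]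
  have hfac : ∀ x : ZMod p, (θ * x * (x - 1) * (x - lam)) ^ m
      = θ ^ m * (x ^ m * (x - 1) ^ m * (x - lam) ^ m) := by
    intro x
    rw [mul_pow, mul_pow, mul_pow]
    ring
  rw [Finset.sum_congr rfl fun x _ => hfac x, ← Finset.mul_sum, aux_key p hodd' lam]
  rw [neg_pow θ m]
  ring
end
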